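/- arXiv:0712.3870 — 12 statements merged into one kernel-verified Lean document; each statement's English description precedes it below -/
import Mathlib

section
/- A valuation v on K goods is nondecreasing (v(A) ≤ v(B) whenever A ⊆ B) if and only if μ(k) ≥ max over bundles A not containing k of θ(A∪{k}) - θ(A), for every good k, where μ(k)=v({k}) and θ is the interaction function of v. -/
/-!
A set function is monotone as soon as it increases along every single insertion `A ↦ insert k A`
with `k ∉ A`, and for such an insertion `θ (insert k A) - θ A = μ k - (v (insert k A) - v A)`.
-/

open Finset

section Interaction

variable {α G : Type*} [DecidableEq α] [AddCommGroup G] {v θ : Finset α → G}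

theorem interaction_insert_sub (hθ : ∀ A, θ A = (∑ k ∈ A, v {k}) - v A) {k : α} {A : Finset α}
    (hk : k ∉ A) : θ (insert k A) - θ A = v {k} + v A - v (insert k A) := by
  rw [hθ, hθ, sum_insert hk]
  abel

theorem le_insert_iff_interaction_insert_sub_le [PartialOrder G] [IsOrderedAddMonoid G]
    (hθ : ∀ A, θ A = (∑ k ∈ A, v {k}) - v A) {k : α} {A : Finset α} (hk : k ∉ A) :
    v A ≤ v (insert k A) ↔ θ (insert k A) - θ A ≤ v {k} := by
  rw [interaction_insert_sub hθ hk, add_sub_assoc, add_le_iff_nonpos_right, sub_nonpos]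

end Interaction

theorem nondecreasing_iff_mu_ge_general {K : ℕ} (v θ : Finset (Fin K) → ℝ)
    (hθ : ∀ A : Finset (Fin K), θ A = (∑ k ∈ A, v {k}) - v A) :
    (∀ A B : Finset (Fin K), A ⊆ B → v A ≤ v B) ↔
    (∀ k : Fin K, ∀ A : Finset (Fin K), k ∉ A → θ (insert k A) - θ A ≤ v {k}) := by
  change Monotone v ↔ _
  rw [monotone_iff_forall_le_insert, forall_comm]
  refine forall₂_congr fun A k => ?_
  exact imp_congr_right (le_insert_iff_interaction_insert_sub_le hθ)

theorem nondecreasing_iff_mu_ge {K : ℕ} (v θ : Finset (Fin K) → ℝ)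
    (hv0 : v ∅ = 0)
    (hθ : ∀ A : Finset (Fin K), θ A = (∑ k ∈ A, v {k}) - v A) :
    (∀ A B : Finset (Fin K), A ⊆ B → v A ≤ v B) ↔
    (∀ k : Fin K, ∀ A : Finset (Fin K), k ∉ A → θ (insert k A) - θ A ≤ v {k}) :=
  nondecreasing_iff_mu_ge_general v θ hθ
end

section
/- Suppose six real numbers δ_{ij}, δ_{ik}, δ_{il}, δ_{jk}, δ_{jl}, δ_{kl} (indexed by the unordered pairs from {i,j,k,l}) are such that every triple corresponding to a triangle (i.e., (δ_{ij},δ_{ik},δ_{jk}), (δ_{ij},δ_{il},δ_{jl}), (δ_{ik},δ_{il},δ_{kl}), (δ_{jk},δ_{jl},δ_{kl})) has the double minimum property. Then the triple (δ_{ij}+δ_{kl}, δ_{ik}+δ_{jl}, δ_{il}+δ_{jk}) has the double minimum property. -/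
/-! The double minimum property of `(x, y, z)` says that each entry is at least the minimum of the
other two. For the three pair sums this becomes the four-point inequality
`min (dik + djl) (dil + djk) ≤ dij + dkl` and its relabelings, each of which follows from the
four triangle inequalities bounding `dij` and `dkl` from below. -/

def DoubleMin (x y z : ℝ) : Prop :=
  (x = min x (min y z) ∧ y = min x (min y z)) ∨
  (x = min x (min y z) ∧ z = min x (min y z)) ∨
  (y = min x (min y z) ∧ z = min x (min y z))

lemma doubleMin_iff_min_le (x y z : ℝ) :
    DoubleMin x y z ↔ min y z ≤ x ∧ min x z ≤ y ∧ min x y ≤ z := by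
  unfold DoubleMin
  rcases le_total x y with hxy | hxy <;> rcases le_total y z with hyz | hyz <;>
    rcases le_total x z with hxz | hxz <;>
    simp only [min_eq_left, min_eq_right, hxy, hyz, hxz] <;>
    constructor <;> intros <;> grind

/- Each hypothesis bounds `dij` or `dkl` below by a term of one of the two sums; the only
combination that bounds neither sum termwise is settled by comparing `dij` with `dkl`. -/
lemma four_point_min_le {dij dik dil djk djl dkl : ℝ}
    (hijk : min dik djk ≤ dij) (hijl : min dil djl ≤ dij)
    (hikl : min dik dil ≤ dkl) (hjkl : min djk djl ≤ dkl) :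
    min (dik + djl) (dil + djk) ≤ dij + dkl := by
  simp only [min_le_iff] at *
  rcases le_total dij dkl with h | h <;>
    rcases hijk with h1 | h1 <;> rcases hijl with h2 | h2 <;>
    rcases hikl with h3 | h3 <;> rcases hjkl with h4 | h4 <;>
    first | (left; linarith) | (right; linarith)

theorem triangle_doubleMin_implies_pairs (dij dik dil djk djl dkl : ℝ)
    (h1 : DoubleMin dij dik djk)
    (h2 : DoubleMin dij dil djl)
    (h3 : DoubleMin dik dil dkl)
    (h4 : DoubleMin djk djl dkl) :
    DoubleMin (dij + dkl) (dik + djl) (dil + djk) := by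
  rw [doubleMin_iff_min_le] at h1 h2 h3 h4 ⊢
  refine ⟨four_point_min_le h1.1 h2.1 h3.2.2 h4.2.2,
    four_point_min_le h1.2.1 h3.1 h2.2.2 h4.2.1, ?_⟩
  rw [min_comm]
  exact four_point_min_le h3.2.1 h2.2.1 (min_comm dij dik ▸ h1.2.2) (min_comm djl dkl ▸ h4.1)
end

section
/- Let 2 ≤ L ≤ K-2 and let θ be an interaction function satisfying S3_θ(L). Then θ satisfies F4_θ(L): for every bundle A with |A|=L-2 and distinct goods i,j,k,l not in A, the triple (θ(Aij)+θ(Akl), θ(Aik)+θ(Ajl), θ(Ail)+θ(Ajk)) has the double minimum property. -/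
theorem doubleMin_iff {x y z : ℝ} :
    DoubleMin x y z ↔ min y z ≤ x ∧ min x z ≤ y ∧ min x y ≤ z := by
  unfold DoubleMin
  grind

theorem doubleMin_add_right_iff {x y z : ℝ} (c : ℝ) :
    DoubleMin (x + c) (y + c) (z + c) ↔ DoubleMin x y z := by
  simp only [doubleMin_iff, min_add_add_right, add_le_add_iff_right]

theorem min_add_le_add_of_min_le {d₁₂ d₁₃ d₁₄ d₂₃ d₂₄ d₃₄ : ℝ}
    (h₁₂₃ : min d₁₃ d₂₃ ≤ d₁₂) (h₁₂₄ : min d₁₄ d₂₄ ≤ d₁₂)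
    (h₁₃₄ : min d₁₃ d₁₄ ≤ d₃₄) (h₂₃₄ : min d₂₃ d₂₄ ≤ d₃₄) :
    min (d₁₃ + d₂₄) (d₁₄ + d₂₃) ≤ d₁₂ + d₃₄ := by
  rw [min_le_iff] at *
  -- Unless `d₁₂` dominates `d₁₃, d₂₄` and `d₃₄` dominates `d₁₄, d₂₃` (or symmetrically), one of
  -- the two sums is dominated termwise; otherwise compare the two sums.
  rcases h₁₂₃ with h₁₂₃ | h₁₂₃ <;> rcases h₁₂₄ with h₁₂₄ | h₁₂₄ <;>
    rcases h₁₃₄ with h₁₃₄ | h₁₃₄ <;> rcases h₂₃₄ with h₂₃₄ | h₂₃₄ <;>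
    rcases le_total (d₁₃ + d₂₄) (d₁₄ + d₂₃) with h | h <;>
    first | exact Or.inl (by linarith) | exact Or.inr (by linarith)

theorem DoubleMin.add_opposite_edges {d₁₂ d₁₃ d₁₄ d₂₃ d₂₄ d₃₄ : ℝ}
    (h₁₂₃ : DoubleMin d₁₂ d₁₃ d₂₃) (h₁₂₄ : DoubleMin d₁₂ d₁₄ d₂₄)
    (h₁₃₄ : DoubleMin d₁₃ d₁₄ d₃₄) (h₂₃₄ : DoubleMin d₂₃ d₂₄ d₃₄) :
    DoubleMin (d₁₂ + d₃₄) (d₁₃ + d₂₄) (d₁₄ + d₂₃) := by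
  rw [doubleMin_iff] at *
  refine ⟨min_add_le_add_of_min_le h₁₂₃.1 h₁₂₄.1 h₁₃₄.2.2 h₂₃₄.2.2,
    min_add_le_add_of_min_le h₁₂₃.2.1 h₁₃₄.1 h₁₂₄.2.2 h₂₃₄.2.1, ?_⟩
  rw [min_comm]
  exact min_add_le_add_of_min_le h₁₃₄.2.1 h₁₂₄.2.1 (min_comm d₁₂ d₁₃ ▸ h₁₂₃.2.2)
    (min_comm d₂₄ d₃₄ ▸ h₂₃₄.1)

theorem DoubleMin.add_opposite_edges_of_add_vertex
    {a₁₂ a₁₃ a₁₄ a₂₃ a₂₄ a₃₄ b₁ b₂ b₃ b₄ : ℝ}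
    (h₁₂₃ : DoubleMin (a₁₂ + b₃) (a₁₃ + b₂) (a₂₃ + b₁))
    (h₁₂₄ : DoubleMin (a₁₂ + b₄) (a₁₄ + b₂) (a₂₄ + b₁))
    (h₁₃₄ : DoubleMin (a₁₃ + b₄) (a₁₄ + b₃) (a₃₄ + b₁))
    (h₂₃₄ : DoubleMin (a₂₃ + b₄) (a₂₄ + b₃) (a₃₄ + b₂)) :
    DoubleMin (a₁₂ + a₃₄) (a₁₃ + a₂₄) (a₁₄ + a₂₃) := by
  have shift : ∀ {x y z x' y' z' : ℝ} (c : ℝ), x = x' + c → y = y' + c → z = z' + c →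
      DoubleMin x y z → DoubleMin x' y' z' := by
    rintro x y z x' y' z' c rfl rfl rfl
    exact (doubleMin_add_right_iff c).1
  refine shift (-(b₁ + b₂ + b₃ + b₄)) (by ring) (by ring) (by ring)
    (DoubleMin.add_opposite_edges (d₁₂ := a₁₂ - b₁ - b₂) (d₁₃ := a₁₃ - b₁ - b₃)
      (d₁₄ := a₁₄ - b₁ - b₄) (d₂₃ := a₂₃ - b₂ - b₃) (d₂₄ := a₂₄ - b₂ - b₄)
      (d₃₄ := a₃₄ - b₃ - b₄) ?_ ?_ ?_ ?_)
  · exact shift (b₁ + b₂ + b₃) (by ring) (by ring) (by ring) h₁₂₃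
  · exact shift (b₁ + b₂ + b₄) (by ring) (by ring) (by ring) h₁₂₄
  · exact shift (b₁ + b₃ + b₄) (by ring) (by ring) (by ring) h₁₃₄
  · exact shift (b₂ + b₃ + b₄) (by ring) (by ring) (by ring) h₂₃₄

theorem S3theta_implies_F4theta_general {K L : ℕ}
    (θ : Finset (Fin K) → ℝ)
    (hS3 : ∀ (A : Finset (Fin K)) (i j k : Fin K), A.card = L - 2 →
      i ∉ A → j ∉ A → k ∉ A → i ≠ j → i ≠ k → j ≠ k →
      DoubleMin (θ (insert i (insert j A)) + θ (insert k A))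
                (θ (insert i (insert k A)) + θ (insert j A))
                (θ (insert j (insert k A)) + θ (insert i A))) :
    ∀ (A : Finset (Fin K)) (i j k l : Fin K), A.card = L - 2 →
      i ∉ A → j ∉ A → k ∉ A → l ∉ A →
      i ≠ j → i ≠ k → i ≠ l → j ≠ k → j ≠ l → k ≠ l →
      DoubleMin (θ (insert i (insert j A)) + θ (insert k (insert l A)))
                (θ (insert i (insert k A)) + θ (insert j (insert l A)))
                (θ (insert i (insert l A)) + θ (insert j (insert k A))) := by
  intro A i j k l hA hi hj hk hl hij hik hil hjk hjl hkl
  exact DoubleMin.add_opposite_edges_of_add_vertex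
    (hS3 A i j k hA hi hj hk hij hik hjk)
    (hS3 A i j l hA hi hj hl hij hil hjl)
    (hS3 A i k l hA hi hk hl hik hil hkl)
    (hS3 A j k l hA hj hk hl hjk hjl hkl)

theorem S3theta_implies_F4theta {K L : ℕ} (hL2 : 2 ≤ L) (hLK : L ≤ K - 2)
    (θ : Finset (Fin K) → ℝ)
    (hθ0 : ∀ A : Finset (Fin K), A.card ≤ 1 → θ A = 0)
    (hS3 : ∀ (A : Finset (Fin K)) (i j k : Fin K), A.card = L - 2 →
      i ∉ A → j ∉ A → k ∉ A → i ≠ j → i ≠ k → j ≠ k →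
      DoubleMin (θ (insert i (insert j A)) + θ (insert k A))
                (θ (insert i (insert k A)) + θ (insert j A))
                (θ (insert j (insert k A)) + θ (insert i A))) :
    ∀ (A : Finset (Fin K)) (i j k l : Fin K), A.card = L - 2 →
      i ∉ A → j ∉ A → k ∉ A → l ∉ A →
      i ≠ j → i ≠ k → i ≠ l → j ≠ k → j ≠ l → k ≠ l →
      DoubleMin (θ (insert i (insert j A)) + θ (insert k (insert l A)))
                (θ (insert i (insert k A)) + θ (insert j (insert l A)))
                (θ (insert i (insert l A)) + θ (insert j (insert k A))) :=
  S3theta_implies_F4theta_general θ hS3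
end

section
/- Suppose either L=1, or 2 ≤ L ≤ K-1 and θ (restricted to sets of size L) satisfies F4_θ(L). Let μ ∈ ℝ^K, and extend θ to sets A with |A| = L+1 by θ(A) = min over i ∈ A of (θ(A−i) + μ(i)). Then the extended θ satisfies S3_θ(L+1): for every bundle A with |A| = L-1 and distinct goods i,j,k ∉ A, the triple (θ(Aij)+θ(Ak), θ(Aik)+θ(Aj), θ(Ajk)+θ(Ai)) has the double minimum property. -/
/-!
Let `A ∪ {i, j}` attain its extended value by dropping the good `m`. If `m ∈ {i, j}`, dropping
the same good from `A ∪ {i, k}` or `A ∪ {j, k}` shows that `θ(Aij) + θ(Ak)` is not the unique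
minimum of the S3 triple. If `m ∈ A`, adding `μ m` to the F4 triple of `A - m` with the goods
`i, j, k, m` turns it into a triple dominating the S3 triple entrywise, with equality in the
first entry; since the first entry of the F4 triple is not its unique minimum, neither is that
of the S3 triple. By symmetry no entry is the unique minimum.
-/

lemma DoubleMin.of_le_or_le {x y z : ℝ} (hx : y ≤ x ∨ z ≤ x) (hy : x ≤ y ∨ z ≤ y)
    (hz : x ≤ z ∨ y ≤ z) : DoubleMin x y z := by
  unfold DoubleMin
  grind

lemma DoubleMin.le_or_le {x y z : ℝ} (h : DoubleMin x y z) : y ≤ x ∨ z ≤ x := by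
  rcases h with ⟨-, h⟩ | ⟨-, h⟩ | ⟨h, -⟩
  · exact Or.inl (h ▸ min_le_left _ _)
  · exact Or.inr (h ▸ min_le_left _ _)
  · exact Or.inl (h ▸ min_le_left _ _)

/-- `F4Condition θ n` is the paper's `F4_θ(n + 2)`: it is indexed by the size of the common
bundle `A`. -/
def F4Condition {α : Type*} [DecidableEq α] (θ : Finset α → ℝ) (n : ℕ) : Prop :=
  ∀ (A : Finset α) (i j k l : α), A.card = n →
    i ∉ A → j ∉ A → k ∉ A → l ∉ A →
    i ≠ j → i ≠ k → i ≠ l → j ≠ k → j ≠ l → k ≠ l →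
    DoubleMin (θ (insert i (insert j A)) + θ (insert k (insert l A)))
              (θ (insert i (insert k A)) + θ (insert j (insert l A)))
              (θ (insert i (insert l A)) + θ (insert j (insert k A)))

section

variable {α : Type*} [DecidableEq α] {θ : Finset α → ℝ} {μ : α → ℝ} {A : Finset α} {i j k : α}

lemma F4Condition.doubleMin_erase {m : α} (hF4 : F4Condition θ (A.card - 1)) (hm : m ∈ A)
    (hi : i ∉ A) (hj : j ∉ A) (hk : k ∉ A) (hij : i ≠ j) (hik : i ≠ k) (hjk : j ≠ k) :
    DoubleMin (θ (insert i (insert j (A.erase m))) + θ (insert k A))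
              (θ (insert i (insert k (A.erase m))) + θ (insert j A))
              (θ (insert i A) + θ (insert j (insert k (A.erase m)))) := by
  have hne {a : α} (ha : a ∉ A) : a ≠ m := (ne_of_mem_of_not_mem hm ha).symm
  have h := hF4 (A.erase m) i j k m (Finset.card_erase_of_mem hm)
    (mt Finset.mem_of_mem_erase hi) (mt Finset.mem_of_mem_erase hj)
    (mt Finset.mem_of_mem_erase hk) (Finset.notMem_erase m A)
    hij hik (hne hi) hjk (hne hj) (hne hk)
  rwa [Finset.insert_erase hm] at h

lemma le_or_le_of_minExtension (hi : i ∉ A) (hj : j ∉ A) (hk : k ∉ A)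
    (hij : i ≠ j) (hik : i ≠ k) (hjk : j ≠ k)
    (hle : ∀ S : Finset α, S.card = A.card + 2 → ∀ m ∈ S, θ S ≤ θ (S.erase m) + μ m)
    (heq : ∀ S : Finset α, S.card = A.card + 2 → ∃ m ∈ S, θ S = θ (S.erase m) + μ m)
    (hF4 : A.Nonempty → F4Condition θ (A.card - 1)) :
    θ (insert i (insert k A)) + θ (insert j A) ≤ θ (insert i (insert j A)) + θ (insert k A) ∨
    θ (insert j (insert k A)) + θ (insert i A) ≤ θ (insert i (insert j A)) + θ (insert k A) := by
  have hcard {a b : α} (ha : a ∉ A) (hb : b ∉ A) (hab : a ≠ b) :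
      (insert a (insert b A)).card = A.card + 2 := by
    rw [Finset.card_insert_of_notMem (by simp [hab, ha]), Finset.card_insert_of_notMem hb]
  obtain ⟨m, hm, heq⟩ := heq _ (hcard hi hj hij)
  have hle_ik := hle _ (hcard hi hk hik)
  have hle_jk := hle _ (hcard hj hk hjk)
  rcases Finset.mem_insert.mp hm with rfl | hm
  · have h := hle_ik m (Finset.mem_insert_self _ _)
    rw [Finset.erase_insert (by simp [hij, hi])] at heq
    rw [Finset.erase_insert (by simp [hik, hi])] at h
    left; linarith
  rcases Finset.mem_insert.mp hm with rfl | hmA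
  · have h := hle_jk m (Finset.mem_insert_self _ _)
    rw [Finset.erase_insert_of_ne hij, Finset.erase_insert hj] at heq
    rw [Finset.erase_insert (by simp [hjk, hj])] at h
    right; linarith
  · have hne {a : α} (ha : a ∉ A) : a ≠ m := (ne_of_mem_of_not_mem hmA ha).symm
    have h_ik := hle_ik m (by simp [hmA])
    have h_jk := hle_jk m (by simp [hmA])
    rw [Finset.erase_insert_of_ne (hne hi), Finset.erase_insert_of_ne (hne hj)] at heq
    rw [Finset.erase_insert_of_ne (hne hi), Finset.erase_insert_of_ne (hne hk)] at h_ik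
    rw [Finset.erase_insert_of_ne (hne hj), Finset.erase_insert_of_ne (hne hk)] at h_jk
    rcases ((hF4 ⟨m, hmA⟩).doubleMin_erase hmA hi hj hk hij hik hjk).le_or_le with h | h
    · left; linarith
    · right; linarith

theorem doubleMin_of_minExtension (hi : i ∉ A) (hj : j ∉ A) (hk : k ∉ A)
    (hij : i ≠ j) (hik : i ≠ k) (hjk : j ≠ k)
    (hle : ∀ S : Finset α, S.card = A.card + 2 → ∀ m ∈ S, θ S ≤ θ (S.erase m) + μ m)
    (heq : ∀ S : Finset α, S.card = A.card + 2 → ∃ m ∈ S, θ S = θ (S.erase m) + μ m)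
    (hF4 : A.Nonempty → F4Condition θ (A.card - 1)) :
    DoubleMin (θ (insert i (insert j A)) + θ (insert k A))
              (θ (insert i (insert k A)) + θ (insert j A))
              (θ (insert j (insert k A)) + θ (insert i A)) := by
  have h_ij := le_or_le_of_minExtension hi hj hk hij hik hjk hle heq hF4
  have h_ik := le_or_le_of_minExtension hi hk hj hik hij hjk.symm hle heq hF4
  have h_jk := le_or_le_of_minExtension hj hk hi hjk hij.symm hik.symm hle heq hF4
  rw [Finset.insert_comm k j A] at h_ik
  rw [Finset.insert_comm j i A, Finset.insert_comm k i A] at h_jk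
  exact .of_le_or_le h_ij h_ik h_jk

end

theorem F4_extension_S3 {K L : ℕ}
    (θ : Finset (Fin K) → ℝ) (μ : Fin K → ℝ)
    (hyp : L = 1 ∨ (2 ≤ L ∧ L ≤ K - 1 ∧
      ∀ (A : Finset (Fin K)) (i j k l : Fin K), A.card = L - 2 →
        i ∉ A → j ∉ A → k ∉ A → l ∉ A →
        i ≠ j → i ≠ k → i ≠ l → j ≠ k → j ≠ l → k ≠ l →
        DoubleMin (θ (insert i (insert j A)) + θ (insert k (insert l A)))
                  (θ (insert i (insert k A)) + θ (insert j (insert l A)))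
                  (θ (insert i (insert l A)) + θ (insert j (insert k A)))))
    (hext_le : ∀ A : Finset (Fin K), A.card = L + 1 → ∀ i ∈ A, θ A ≤ θ (A.erase i) + μ i)
    (hext_eq : ∀ A : Finset (Fin K), A.card = L + 1 → ∃ i ∈ A, θ A = θ (A.erase i) + μ i) :
    ∀ (A : Finset (Fin K)) (i j k : Fin K), A.card = L - 1 →
      i ∉ A → j ∉ A → k ∉ A → i ≠ j → i ≠ k → j ≠ k →
      DoubleMin (θ (insert i (insert j A)) + θ (insert k A))
                (θ (insert i (insert k A)) + θ (insert j A))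
                (θ (insert j (insert k A)) + θ (insert i A)) := by
  intro A i j k hA hi hj hk hij hik hjk
  have hcard : A.card + 2 = L + 1 := by rcases hyp with rfl | ⟨hL, -⟩ <;> omega
  refine doubleMin_of_minExtension hi hj hk hij hik hjk
    (fun S hS => hext_le S (hcard ▸ hS)) (fun S hS => hext_eq S (hcard ▸ hS)) fun hA₀ => ?_
  rcases hyp with rfl | ⟨hL, -, hF4⟩
  · have := hA₀.card_pos
    omega
  · rwa [show A.card - 1 = L - 2 by omega]
end

section
/- The set of nondecreasing substitute valuations on K goods, characterized as the set of v : 2^K → ℝ with v(∅)=0 that are nondecreasing, submodular, and satisfy S3, can be written as a finite union of polyhedrons (finite intersections of closed half-spaces) in ℝ^{2^K}. -/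
def DoubleMax (x y z : ℝ) : Prop :=
  (x = max x (max y z) ∧ y = max x (max y z)) ∨
  (x = max x (max y z) ∧ z = max x (max y z)) ∨
  (y = max x (max y z) ∧ z = max x (max y z))

/-- A polyhedron: a nonempty finite intersection of closed half-spaces. -/
def IsPolyhedron {K : ℕ} (P : Set (Finset (Fin K) → ℝ)) : Prop :=
  P.Nonempty ∧ ∃ (m : ℕ) (φ : Fin m → ((Finset (Fin K) → ℝ) →ₗ[ℝ] ℝ)) (c : Fin m → ℝ),
    P = {v | ∀ t : Fin m, φ t v ≤ c t}

/-!
Every defining condition of the set is a finite conjunction of linear inequalities among the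
values `v A`, except S3, which for each triple is a disjunction of three such systems: two of the
three sums are equal and dominate the third. Distributing the finite intersection over these
finite unions (one piece for each choice of a case per triple) exhibits the set as a finite union
of finite intersections of half-spaces, and the empty pieces can be dropped.
-/

namespace Polyhedral

variable {𝕜 E : Type*} [Ring 𝕜] [PartialOrder 𝕜] [AddCommGroup E] [Module 𝕜 E]

variable (𝕜) in
/-- Unlike `IsPolyhedron`, not required to be nonempty. -/
def IsPolyhedral (P : Set E) : Prop :=
  ∃ (m : ℕ) (φ : Fin m → E →ₗ[𝕜] 𝕜) (c : Fin m → 𝕜), P = {v | ∀ t, φ t v ≤ c t}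

theorem isPolyhedral_setOf_le [IsOrderedAddMonoid 𝕜] (f g : E →ₗ[𝕜] 𝕜) :
    IsPolyhedral 𝕜 {v : E | f v ≤ g v} :=
  ⟨1, fun _ => f - g, fun _ => 0, by ext v; simp⟩

theorem isPolyhedral_iInter {ι : Type*} [Finite ι] {P : ι → Set E}
    (h : ∀ i, IsPolyhedral 𝕜 (P i)) : IsPolyhedral 𝕜 (⋂ i, P i) := by
  have := Fintype.ofFinite ι
  choose m φ c hP using h
  let e : Fin (Fintype.card (Σ i, Fin (m i))) ≃ Σ i, Fin (m i) := (Fintype.equivFin _).symm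
  refine ⟨_, fun t => φ (e t).1 (e t).2, fun t => c (e t).1 (e t).2, ?_⟩
  ext v
  simp only [Set.mem_iInter, hP, Set.mem_ofPred_eq]
  exact ⟨fun hv t => hv _ _, fun hv i j => by
    have := hv (e.symm ⟨i, j⟩)
    rwa [e.apply_symm_apply] at this⟩

variable (𝕜) in
def IsPolyhedralUnion (S : Set E) : Prop :=
  ∃ (n : ℕ) (P : Fin n → Set E), (∀ a, IsPolyhedral 𝕜 (P a)) ∧ S = ⋃ a, P a

theorem isPolyhedralUnion_iUnion {ι : Type*} [Finite ι] {P : ι → Set E}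
    (h : ∀ i, IsPolyhedral 𝕜 (P i)) : IsPolyhedralUnion 𝕜 (⋃ i, P i) := by
  have := Fintype.ofFinite ι
  let e := (Fintype.equivFin ι).symm
  exact ⟨_, fun a => P (e a), fun a => h _, (e.iSup_comp (g := P)).symm⟩

theorem IsPolyhedral.isPolyhedralUnion {P : Set E} (h : IsPolyhedral 𝕜 P) :
    IsPolyhedralUnion 𝕜 P :=
  ⟨1, fun _ => P, fun _ => h, (Set.iUnion_const P).symm⟩

theorem isPolyhedralUnion_univ : IsPolyhedralUnion 𝕜 (Set.univ : Set E) := by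
  simpa using (isPolyhedral_iInter (ι := Empty) (P := fun _ => (Set.univ : Set E))
    nofun).isPolyhedralUnion

theorem isPolyhedralUnion_iInter {ι : Type*} [Finite ι] {S : ι → Set E}
    (h : ∀ i, IsPolyhedralUnion 𝕜 (S i)) : IsPolyhedralUnion 𝕜 (⋂ i, S i) := by
  choose n P hP hS using h
  simp only [hS]
  rw [show ⋂ i, ⋃ a, P i a = ⋃ σ : ∀ i, Fin (n i), ⋂ i, P i (σ i) from iInf_iSup_eq]
  exact isPolyhedralUnion_iUnion fun σ => isPolyhedral_iInter fun i => hP i (σ i)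

theorem IsPolyhedralUnion.union {S T : Set E} (hS : IsPolyhedralUnion 𝕜 S)
    (hT : IsPolyhedralUnion 𝕜 T) : IsPolyhedralUnion 𝕜 (S ∪ T) := by
  obtain ⟨n, P, hP, rfl⟩ := hS
  obtain ⟨m, Q, hQ, rfl⟩ := hT
  rw [← Set.iUnion_sumElim]
  exact isPolyhedralUnion_iUnion fun | .inl a => hP a | .inr b => hQ b

theorem IsPolyhedralUnion.inter {S T : Set E} (hS : IsPolyhedralUnion 𝕜 S)
    (hT : IsPolyhedralUnion 𝕜 T) : IsPolyhedralUnion 𝕜 (S ∩ T) := by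
  rw [Set.inter_eq_iInter]
  exact isPolyhedralUnion_iInter fun | true => hS | false => hT

theorem isPolyhedralUnion_setOf_forall {ι : Type*} [Finite ι] {p : ι → E → Prop}
    (h : ∀ i, IsPolyhedralUnion 𝕜 {v | p i v}) : IsPolyhedralUnion 𝕜 {v | ∀ i, p i v} := by
  rw [Set.ofPred_forall]
  exact isPolyhedralUnion_iInter h

theorem isPolyhedralUnion_setOf_imp (q : Prop) {p : E → Prop}
    (h : IsPolyhedralUnion 𝕜 {v | p v}) : IsPolyhedralUnion 𝕜 {v | q → p v} := by
  by_cases hq : q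
  · simpa [hq] using h
  · simpa [hq] using isPolyhedralUnion_univ

theorem isPolyhedralUnion_setOf_eq [IsOrderedAddMonoid 𝕜] (f g : E →ₗ[𝕜] 𝕜) :
    IsPolyhedralUnion 𝕜 {v | f v = g v} := by
  simp only [le_antisymm_iff]
  exact (isPolyhedral_setOf_le f g).isPolyhedralUnion.inter
    (isPolyhedral_setOf_le g f).isPolyhedralUnion

theorem IsPolyhedralUnion.exists_nonempty {S : Set E} (h : IsPolyhedralUnion 𝕜 S) :
    ∃ (n : ℕ) (P : Fin n → Set E), (∀ a, (P a).Nonempty ∧ IsPolyhedral 𝕜 (P a)) ∧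
      S = ⋃ a, P a := by
  classical
  obtain ⟨n, P, hP, rfl⟩ := h
  let e := (Fintype.equivFin {a // (P a).Nonempty}).symm
  refine ⟨_, fun b => P (e b), fun b => ⟨(e b).2, hP _⟩, ?_⟩
  ext v
  simp only [Set.mem_iUnion]
  exact ⟨fun ⟨a, hv⟩ => ⟨e.symm ⟨a, v, hv⟩, by simpa using hv⟩, fun ⟨b, hv⟩ => ⟨_, hv⟩⟩

end Polyhedral

open Polyhedral

theorem doubleMax_iff (x y z : ℝ) :
    DoubleMax x y z ↔ (x = y ∧ z ≤ x) ∨ (x = z ∧ y ≤ x) ∨ (y = z ∧ x ≤ y) := by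
  unfold DoubleMax
  grind

theorem isPolyhedralUnion_setOf_doubleMax {E : Type*} [AddCommGroup E] [Module ℝ E]
    (f g h : E →ₗ[ℝ] ℝ) : IsPolyhedralUnion ℝ {v | DoubleMax (f v) (g v) (h v)} := by
  have eq_and_le (a b c : E →ₗ[ℝ] ℝ) : IsPolyhedralUnion ℝ {v | a v = b v ∧ c v ≤ a v} :=
    (isPolyhedralUnion_setOf_eq a b).inter (isPolyhedral_setOf_le c a).isPolyhedralUnion
  simp only [doubleMax_iff]
  exact (eq_and_le f g h).union ((eq_and_le f h g).union (eq_and_le g h f))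

def substituteValuations (K : ℕ) : Set (Finset (Fin K) → ℝ) :=
  {v | v ∅ = 0 ∧
    (∀ A B : Finset (Fin K), A ⊆ B → v A ≤ v B) ∧
    (∀ A B : Finset (Fin K), v (A ∪ B) + v (A ∩ B) ≤ v A + v B) ∧
    (∀ (A : Finset (Fin K)) (i j k : Fin K),
      i ∉ A → j ∉ A → k ∉ A → i ≠ j → i ≠ k → j ≠ k →
      DoubleMax (v (insert i (insert j A)) + v (insert k A))
                (v (insert i (insert k A)) + v (insert j A))
                (v (insert j (insert k A)) + v (insert i A)))}

theorem isPolyhedralUnion_substituteValuations (K : ℕ) :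
    IsPolyhedralUnion ℝ (substituteValuations K) := by
  let ev (A : Finset (Fin K)) : (Finset (Fin K) → ℝ) →ₗ[ℝ] ℝ := LinearMap.proj A
  refine (isPolyhedralUnion_setOf_eq (ev ∅) 0).inter
    ((isPolyhedralUnion_setOf_forall fun A => isPolyhedralUnion_setOf_forall fun B =>
      isPolyhedralUnion_setOf_imp _ (isPolyhedral_setOf_le (ev A) (ev B)).isPolyhedralUnion).inter
    ((isPolyhedralUnion_setOf_forall fun A => isPolyhedralUnion_setOf_forall fun B =>
      (isPolyhedral_setOf_le (ev (A ∪ B) + ev (A ∩ B)) (ev A + ev B)).isPolyhedralUnion).inter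
    (isPolyhedralUnion_setOf_forall fun A => isPolyhedralUnion_setOf_forall fun i =>
      isPolyhedralUnion_setOf_forall fun j => isPolyhedralUnion_setOf_forall fun k => ?_)))
  repeat refine isPolyhedralUnion_setOf_imp _ ?_
  exact isPolyhedralUnion_setOf_doubleMax (ev (insert i (insert j A)) + ev (insert k A))
    (ev (insert i (insert k A)) + ev (insert j A)) (ev (insert j (insert k A)) + ev (insert i A))

theorem substitute_valuations_union_polyhedra_general (K : ℕ) :
    ∃ (n : ℕ) (P : Fin n → Set (Finset (Fin K) → ℝ)),
      (∀ a : Fin n, IsPolyhedron (P a)) ∧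
      {v : Finset (Fin K) → ℝ |
        v ∅ = 0 ∧
        (∀ A B : Finset (Fin K), A ⊆ B → v A ≤ v B) ∧
        (∀ A B : Finset (Fin K), v (A ∪ B) + v (A ∩ B) ≤ v A + v B) ∧
        (∀ (A : Finset (Fin K)) (i j k : Fin K),
          i ∉ A → j ∉ A → k ∉ A → i ≠ j → i ≠ k → j ≠ k →
          DoubleMax (v (insert i (insert j A)) + v (insert k A))
                    (v (insert i (insert k A)) + v (insert j A))
                    (v (insert j (insert k A)) + v (insert i A)))} = ⋃ a, P a :=
  (isPolyhedralUnion_substituteValuations K).exists_nonempty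

theorem substitute_valuations_union_polyhedra (K : ℕ) (hK : 1 ≤ K) :
    ∃ (n : ℕ) (P : Fin n → Set (Finset (Fin K) → ℝ)),
      (∀ a : Fin n, IsPolyhedron (P a)) ∧
      {v : Finset (Fin K) → ℝ |
        v ∅ = 0 ∧
        (∀ A B : Finset (Fin K), A ⊆ B → v A ≤ v B) ∧
        (∀ A B : Finset (Fin K), v (A ∪ B) + v (A ∩ B) ≤ v A + v B) ∧
        (∀ (A : Finset (Fin K)) (i j k : Fin K),
          i ∉ A → j ∉ A → k ∉ A → i ≠ j → i ≠ k → j ≠ k →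
          DoubleMax (v (insert i (insert j A)) + v (insert k A))
                    (v (insert i (insert k A)) + v (insert j A))
                    (v (insert j (insert k A)) + v (insert i A)))} = ⋃ a, P a :=
  substitute_valuations_union_polyhedra_general K
end

section
/- Let W be a K×K real matrix that is nonnegative, nonincreasing in the row index (w(i+1,k) ≤ w(i,k)), and supermodular (w(i+1,k+1) − w(i,k+1) − w(i+1,k) + w(i,k) ≥ 0). Then for any bundle A = {k_1 < k_2 < ... < k_L} ⊆ {1,...,K}, the assignment σ_i = k_i for 1 ≤ i ≤ L achieves the maximum total weight over all assignments of the goods in A to distinct rows (buyers), where unassigned buyers get weight 0. -/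
/-!
Extend the partial matching to an injection `m` from the goods `k₁ < ⋯ < k_L` into the buyers;
by nonnegativity this does not decrease the value. Then induct on `L`. By supermodularity,
swapping buyers so that the largest good `k_L` goes to the highest-indexed buyer in the image
of `m` does not decrease the value; by pigeonhole that buyer has index at least `L`, so
monotonicity in the buyer index lets us hand `k_L` to the `L`-th buyer instead, and the other
`L - 1` goods are handled by induction.
-/

open Finset Function

theorem Fin.monotone_of_le_add_one {α : Type*} [Preorder α] {K : ℕ} {f : Fin K → α}
    (h : ∀ (i : Fin K) (hi : i.val + 1 < K), f i ≤ f ⟨i.val + 1, hi⟩) : Monotone f := by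
  cases K with
  | zero => exact fun i => i.elim0
  | succ n => exact Fin.monotone_iff_le_succ.2 fun i => h i.castSucc (by simp)

theorem Fin.antitone_of_add_one_le {α : Type*} [Preorder α] {K : ℕ} {f : Fin K → α}
    (h : ∀ (i : Fin K) (hi : i.val + 1 < K), f ⟨i.val + 1, hi⟩ ≤ f i) : Antitone f :=
  Fin.monotone_of_le_add_one (α := αᵒᵈ) h

def Supermodular {α β M : Type*} [LE α] [LE β] [Add M] [LE M] (W : α → β → M) : Prop :=
  ∀ ⦃i j : α⦄, i ≤ j → ∀ ⦃k l : β⦄, k ≤ l → W i l + W j k ≤ W i k + W j l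

theorem supermodular_of_add_one {M : Type*} [AddCommGroup M] [PartialOrder M]
    [IsOrderedAddMonoid M] {K : ℕ} {W : Fin K → Fin K → M}
    (h : ∀ (i k : Fin K) (hi : i.val + 1 < K) (hk : k.val + 1 < K),
      W i ⟨k.val + 1, hk⟩ + W ⟨i.val + 1, hi⟩ k ≤ W i k + W ⟨i.val + 1, hi⟩ ⟨k.val + 1, hk⟩) :
    Supermodular W := by
  have hcol (i : Fin K) (hi : i.val + 1 < K) : Monotone fun k => W ⟨i.val + 1, hi⟩ k - W i k :=
    Fin.monotone_of_le_add_one fun k hk => by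
      rw [sub_le_sub_iff, add_comm]
      simpa only [add_comm] using h i k hi hk
  intro i j hij k l hkl
  have hrow : Monotone fun i => W i l - W i k :=
    Fin.monotone_of_le_add_one fun i hi => by
      have := hcol i hi hkl
      rw [sub_le_sub_iff] at this
      rwa [sub_le_sub_iff, add_comm (W i l)]
  have := hrow hij
  rwa [sub_le_sub_iff, add_comm (W j l)] at this

theorem Finset.sum_le_sum_comp_swap {ι M : Type*} [Fintype ι] [DecidableEq ι] [AddCommMonoid M]
    [PartialOrder M] [IsOrderedAddMonoid M] (F : ι → ι → M) {a c : ι}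
    (h : F a a + F c c ≤ F c a + F a c) : ∑ t, F t t ≤ ∑ t, F (Equiv.swap a c t) t := by
  obtain rfl | hac := eq_or_ne a c
  · simp
  have hc : c ∈ (univ : Finset ι).erase a := mem_erase.2 ⟨hac.symm, mem_univ c⟩
  simp only [← add_sum_erase _ _ (mem_univ a), ← add_sum_erase _ _ hc, ← add_assoc,
    Equiv.swap_apply_left, Equiv.swap_apply_right]
  refine add_le_add h (sum_congr rfl fun t ht => ?_).le
  simp only [mem_erase] at ht
  rw [Equiv.swap_apply_of_ne_of_ne ht.2.1 ht.1]

theorem Fin.le_add_one_of_injective_of_forall_le {L K : ℕ} {m : Fin L → Fin K} (hm : Injective m)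
    {r : Fin K} (hr : ∀ t, m t ≤ r) : L ≤ r + 1 := by
  classical
  calc L = #(univ.image m) := by rw [card_image_of_injective _ hm, card_univ, Fintype.card_fin]
    _ ≤ #(Iic r) := card_le_card fun x hx => by
        obtain ⟨t, -, rfl⟩ := mem_image.1 hx
        exact mem_Iic.2 (hr t)
    _ = r + 1 := Fin.card_Iic r

theorem Supermodular.sum_le_sum_castLE {β M : Type*} [Preorder β] [AddCommMonoid M]
    [PartialOrder M] [IsOrderedAddMonoid M] {K : ℕ} {W : Fin K → β → M} (hW : Supermodular W)
    (hanti : ∀ k, Antitone (W · k)) {L : ℕ} (hL : L ≤ K) {b : Fin L → β} (hb : Monotone b)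
    {m : Fin L → Fin K} (hm : Injective m) :
    ∑ t, W (m t) (b t) ≤ ∑ t, W (Fin.castLE hL t) (b t) := by
  classical
  induction L with
  | zero => simp
  | succ n ih =>
    obtain ⟨t₀, -, ht₀⟩ := exists_max_image univ m univ_nonempty
    set m' := m ∘ Equiv.swap t₀ (Fin.last n)
    have hexchange : ∑ t, W (m t) (b t) ≤ ∑ t, W (m' t) (b t) := by
      refine sum_le_sum_comp_swap (fun r t => W (m r) (b t)) ?_
      rw [add_comm]
      exact hW (ht₀ _ (mem_univ _)) (hb (Fin.le_last t₀))
    have hlast : n ≤ m' (Fin.last n) := by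
      have := Fin.le_add_one_of_injective_of_forall_le hm fun t => ht₀ t (mem_univ t)
      simp only [m', comp_apply, Equiv.swap_apply_right]
      omega
    refine hexchange.trans ?_
    rw [Fin.sum_univ_castSucc, Fin.sum_univ_castSucc (fun t => W (Fin.castLE hL t) (b t))]
    exact add_le_add (ih (by omega) (hb.comp Fin.strictMono_castSucc.monotone)
      ((hm.comp (Equiv.injective _)).comp (Fin.castSucc_injective n))) (hanti _ hlast)

theorem exists_injective_extends_partialInv {α β γ : Type*} [Fintype α] [Fintype β]
    (hcard : Fintype.card α ≤ Fintype.card β) {b : α → γ} (hb : Injective b) {σ : β → Option γ}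
    (hσ : ∀ i i' x, σ i = some x → σ i' = some x → i = i') :
    ∃ m : α → β, Injective m ∧ ∀ i t, σ i = some (b t) → m t = i := by
  classical
  rcases isEmpty_or_nonempty α with _ | _
  · exact ⟨isEmptyElim, fun t => isEmptyElim t, fun _ t => isEmptyElim t⟩
  have : Nonempty β := Fintype.card_pos_iff.1 (Fintype.card_pos.trans_le hcard)
  let f t := invFun σ (some (b t))
  let s : Set α := {t | some (b t) ∈ Set.range σ}
  have hf : ∀ t ∈ s, σ (f t) = some (b t) := fun t ht => invFun_eq ht
  have hfs : Set.InjOn f s := fun t ht t' ht' h =>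
    hb (Option.some_injective _ ((hf t ht).symm.trans (h ▸ hf t' ht')))
  obtain ⟨u, hsu, -, hu⟩ := exists_subsuperset_card_eq (subset_univ (s.toFinset.image f))
    (card_image_le.trans (card_le_univ _)) (hcard.trans_eq (card_univ.symm))
  obtain ⟨g, hg⟩ := Set.MapsTo.exists_equiv_extend_of_card_eq hu.symm
    (fun t ht => hsu (mem_image_of_mem f (Set.mem_toFinset.2 ht))) hfs
  refine ⟨fun t => g t, Subtype.val_injective.comp g.injective, fun i t hi => ?_⟩
  have ht : t ∈ s := ⟨i, hi⟩
  exact (hg t ht).trans (hσ _ _ _ (hf t ht) hi)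

theorem sum_elim_le_sum_of_injective {α β γ M : Type*} [Fintype α] [Fintype β] [AddCommMonoid M]
    [PartialOrder M] [IsOrderedAddMonoid M] {W : β → γ → M} (hW : ∀ i x, 0 ≤ W i x)
    {σ : β → Option γ} {b : α → γ} (hσb : ∀ i x, σ i = some x → ∃ t, b t = x) {m : α → β}
    (hm : Injective m) (hmσ : ∀ i t, σ i = some (b t) → m t = i) :
    ∑ i, (σ i).elim 0 (W i) ≤ ∑ t, W (m t) (b t) := by
  classical
  have hsupp : ∀ i ∉ univ.image m, (σ i).elim 0 (W i) = 0 := by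
    intro i hi
    cases hσi : σ i with
    | none => rfl
    | some x =>
      obtain ⟨t, rfl⟩ := hσb i x hσi
      exact absurd (mem_image.2 ⟨t, mem_univ t, hmσ i t hσi⟩) hi
  rw [← sum_subset (subset_univ _) fun i _ hi => hsupp i hi, sum_image fun t _ t' _ h => hm h]
  refine sum_le_sum fun t _ => ?_
  cases hσt : σ (m t) with
  | none => exact hW _ _
  | some x =>
    obtain ⟨t', rfl⟩ := hσb _ x hσt
    rw [hm (hmσ _ t' hσt)]
    rfl

theorem monotone_assignment_optimal {K : ℕ} (W : Fin K → Fin K → ℝ)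
    (hnn : ∀ i k : Fin K, 0 ≤ W i k)
    (hmono : ∀ (i k : Fin K) (h : i.val + 1 < K), W ⟨i.val + 1, h⟩ k ≤ W i k)
    (hsuper : ∀ (i k : Fin K) (hi : i.val + 1 < K) (hk : k.val + 1 < K),
      W i ⟨k.val + 1, hk⟩ + W ⟨i.val + 1, hi⟩ k ≤
        W i k + W ⟨i.val + 1, hi⟩ ⟨k.val + 1, hk⟩)
    (A : Finset (Fin K))
    (σ : Fin K → Option (Fin K))
    (hσA : ∀ (i : Fin K) (x : Fin K), σ i = some x → x ∈ A)
    (hinj : ∀ (i i' : Fin K) (x : Fin K), σ i = some x → σ i' = some x → i = i') :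
    ∑ i : Fin K, (σ i).elim 0 (W i) ≤
      ∑ t : Fin A.card,
        W (Fin.castLE (by simpa using A.card_le_univ) t) (A.orderIsoOfFin rfl t) := by
  have hLK : A.card ≤ K := by simpa using A.card_le_univ
  set e := A.orderIsoOfFin rfl
  have hb : StrictMono fun t => (e t : Fin K) := fun s t h => e.strictMono h
  have hσb : ∀ i x, σ i = some x → ∃ t, (e t : Fin K) = x :=
    fun i x hx => ⟨e.symm ⟨x, hσA i x hx⟩, by simp⟩
  obtain ⟨m, hm, hmσ⟩ :=
    exists_injective_extends_partialInv (by simpa using hLK) hb.injective hinj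
  calc ∑ i, (σ i).elim 0 (W i) ≤ ∑ t, W (m t) (e t) :=
        sum_elim_le_sum_of_injective hnn hσb hm hmσ
    _ ≤ _ := (supermodular_of_add_one hsuper).sum_le_sum_castLE
        (fun k => Fin.antitone_of_add_one_le fun i hi => hmono i k hi) hLK hb.monotone hm
end

section
/- For K=4 goods, a valuation v of 'Case 2' type with pairwise penalties δ_{ij}=δ_{jk}=δ_{kl}=δ_{il}=a, δ_{ik}=b, δ_{jl}=c, where 0 < a < min{b,c}, is not an assignment valuation: there is no weight matrix W such that v(A) equals the maximum weight matching value of A for all bundles A. -/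
/-- `AssignVal n W A r` says that `r` is the maximum total weight over all ways to
assign the goods in `A` injectively to the `n` buyers (not all goods need be
assigned; unassigned buyers contribute `0`), with weight matrix `W`. -/
def AssignVal (n : ℕ) (W : Fin n → Fin 4 → ℝ) (A : Finset (Fin 4)) (r : ℝ) : Prop :=
  IsGreatest {s : ℝ | ∃ σ : Fin n → Option (Fin 4),
    (∀ (b : Fin n) (x : Fin 4), σ b = some x → x ∈ A) ∧
    (∀ (b b' : Fin n) (x : Fin 4), σ b = some x → σ b' = some x → b = b') ∧
    s = ∑ b : Fin n, (σ b).elim 0 (W b)} r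

/-!
Since `δ_kl > 0`, the values `v {k}` and `v {l}` are attained in one common row `b₀` of `W`:
two different rows would give `v {k, l} ≥ v {k} + v {l}`. Pairing any other row `t` with `b₀`
inside `{i, k}` and `{j, l}` gives `W t i ≤ v {i} - b` and `W t j ≤ v {j} - c`. An assignment
of `{i, j}` uses `b₀` for at most one of the two goods, so `v {i, j} ≤ v {i} + v {j} - min b c`,
that is `δ_ij ≥ min b c > a`.
-/

open Finset

theorem Finset.sum_option_elim_le_of_injective {ι α : Type*} [Fintype ι] [DecidableEq α]
    {σ : ι → Option α} {A : Finset α} {u : α → ℝ} (hσA : ∀ b x, σ b = some x → x ∈ A)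
    (hσ : ∀ b b' x, σ b = some x → σ b' = some x → b = b') (hu : ∀ x ∈ A, 0 ≤ u x) :
    ∑ b, (σ b).elim 0 u ≤ ∑ x ∈ A, u x := by
  have hrow : ∀ b, (σ b).elim 0 u = ∑ x ∈ A, if σ b = some x then u x else 0 := by
    intro b
    cases hb : σ b with
    | none => simp
    | some y => simp [hσA b y hb]
  have hcol : ∀ x ∈ A, ∑ b, (if σ b = some x then u x else 0) ≤ u x := by
    intro x hx
    have hcard : #{b | σ b = some x} ≤ 1 :=
      card_le_one.mpr fun b hb b' hb' => hσ b b' x (by simpa using hb) (by simpa using hb')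
    rw [sum_ite, sum_const_zero, add_zero, sum_const, nsmul_eq_mul]
    exact mul_le_of_le_one_left (hu x hx) (by exact_mod_cast hcard)
  calc ∑ b, (σ b).elim 0 u = ∑ x ∈ A, ∑ b, if σ b = some x then u x else 0 := by
        simp_rw [hrow]; exact sum_comm
    _ ≤ ∑ x ∈ A, u x := sum_le_sum hcol

namespace AssignVal

variable {n : ℕ} {W : Fin n → Fin 4 → ℝ} {A B : Finset (Fin 4)} {r s : ℝ} {x y : Fin 4}

theorem sum_le (h : AssignVal n W A r) {σ : Fin n → Option (Fin 4)}
    (hσA : ∀ b x, σ b = some x → x ∈ A)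
    (hσ : ∀ b b' x, σ b = some x → σ b' = some x → b = b') :
    ∑ b, (σ b).elim 0 (W b) ≤ r :=
  h.2 ⟨σ, hσA, hσ, rfl⟩

theorem mono (hA : AssignVal n W A r) (hB : AssignVal n W B s) (hAB : A ⊆ B) : r ≤ s := by
  obtain ⟨σ, hσA, hσ, rfl⟩ := hA.1
  exact hB.sum_le (fun b x hx => hAB (hσA b x hx)) hσ

theorem weight_le (h : AssignVal n W A r) (t : Fin n) (hx : x ∈ A) : W t x ≤ r := by
  have hrow : ∀ b, (if b = t then some x else none).elim 0 (W b) = if b = t then W t x else 0 := by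
    intro b; split_ifs <;> simp_all
  simpa [hrow] using
    h.sum_le (σ := fun b => if b = t then some x else none) (by grind) (by grind)

theorem weight_add_weight_le (h : AssignVal n W A r) {t t' : Fin n} (ht : t ≠ t')
    (hxy : x ≠ y) (hx : x ∈ A) (hy : y ∈ A) : W t x + W t' y ≤ r := by
  have hrow : ∀ b, (if b = t then some x else if b = t' then some y else none).elim 0 (W b) =
      (if b = t then W t x else 0) + if b = t' then W t' y else 0 := by
    intro b; split_ifs <;> simp_all
  simpa [hrow, sum_add_distrib] using
    h.sum_le (σ := fun b => if b = t then some x else if b = t' then some y else none)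
      (by grind) (by grind)

theorem le_sum_add (h : AssignVal n W A r) (b₀ : Fin n) {u : Fin 4 → ℝ} {e : ℝ}
    (hu : ∀ x ∈ A, 0 ≤ u x) (he : 0 ≤ e) (hW : ∀ t ≠ b₀, ∀ x ∈ A, W t x ≤ u x)
    (hW₀ : ∀ x ∈ A, W b₀ x ≤ u x + e) :
    r ≤ ∑ x ∈ A, u x + e := by
  obtain ⟨σ, hσA, hσ, rfl⟩ := h.1
  have hrow : ∀ b, (σ b).elim 0 (W b) ≤ (σ b).elim 0 u + if b = b₀ then e else 0 := by
    intro b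
    cases hb : σ b with
    | none => split_ifs <;> simp [he]
    | some x =>
      split_ifs with hb₀
      · subst hb₀; simpa using hW₀ x (hσA _ x hb)
      · simpa using hW b hb₀ x (hσA b x hb)
  calc ∑ b, (σ b).elim 0 (W b)
      ≤ ∑ b, ((σ b).elim 0 u + if b = b₀ then e else 0) := sum_le_sum fun b _ => hrow b
    _ = ∑ b, (σ b).elim 0 u + e := by rw [sum_add_distrib, sum_ite_eq']; simp
    _ ≤ ∑ x ∈ A, u x + e := by gcongr; exact sum_option_elim_le_of_injective hσA hσ hu

theorem exists_weight_eq (h : AssignVal n W {x} r) (hW : ∀ t, 0 ≤ W t x) (hr : 0 < r) :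
    ∃ t, W t x = r := by
  cases n with
  | zero =>
    obtain ⟨σ, -, -, rfl⟩ := h.1
    simp at hr
  | succ n =>
    obtain ⟨t, ht⟩ := Finite.exists_max fun t => W t x
    refine ⟨t, le_antisymm (h.weight_le t (mem_singleton_self x)) ?_⟩
    simpa using h.le_sum_add t (u := fun _ => W t x) (by simp [hW t]) le_rfl
      (by simpa using fun t' _ => ht t') (by simp)

theorem exists_common_row_of_lt_add {p q : ℝ} (hx : AssignVal n W {x} p)
    (hy : AssignVal n W {y} q) (hxy : AssignVal n W {x, y} s) (hW : ∀ t g, 0 ≤ W t g)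
    (hne : x ≠ y) (hs : s < p + q) : ∃ t, W t x = p ∧ W t y = q := by
  obtain ⟨t, rfl⟩ := hx.exists_weight_eq (hW · x) (by linarith [hy.mono hxy (by simp)])
  obtain ⟨t', rfl⟩ := hy.exists_weight_eq (hW · y) (by linarith [hx.mono hxy (by simp)])
  obtain rfl : t = t' := by
    by_contra ht
    linarith [hxy.weight_add_weight_le ht hne (by simp) (by simp)]
  exact ⟨t, rfl, rfl⟩

theorem le_add_sub_min (h : AssignVal n W {x, y} s) (hne : x ≠ y) (b₀ : Fin n)
    {p q d d' : ℝ} (hx₀ : W b₀ x ≤ p) (hy₀ : W b₀ y ≤ q)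
    (hx : ∀ t ≠ b₀, W t x ≤ p - d) (hy : ∀ t ≠ b₀, W t y ≤ q - d')
    (hd : 0 ≤ d) (hdp : d ≤ p) (hd'q : d' ≤ q) :
    s ≤ p + q - min d d' := by
  have := h.le_sum_add b₀ (u := fun g => if g = x then p - d else q - d') (e := max d d')
    (by simp [hne.symm, hdp, hd'q]) (le_max_of_le_left hd)
    (by simpa [hne.symm] using fun t ht => ⟨hx t ht, hy t ht⟩)
    (by simpa [hne.symm] using ⟨by linarith [le_max_left d d'], by linarith [le_max_right d d']⟩)
  rw [sum_pair hne] at this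
  simp only [if_pos, if_neg hne.symm] at this
  linarith [min_add_max d d']

end AssignVal

theorem case2_not_assignment_valuation_general
    (v : Finset (Fin 4) → ℝ)
    (i j k l : Fin 4)
    (hij : i ≠ j) (hik : i ≠ k) (hjl : j ≠ l) (hkl : k ≠ l)
    (a b c : ℝ)
    (hdij : v {i} + v {j} - v {i, j} = a)
    (hdkl : v {k} + v {l} - v {k, l} = a)
    (hdik : v {i} + v {k} - v {i, k} = b)
    (hdjl : v {j} + v {l} - v {j, l} = c)
    (ha : 0 < a) (hab : a < b) (hac : a < c) :
    ¬ ∃ (n : ℕ) (W : Fin n → Fin 4 → ℝ),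
        (∀ (bu : Fin n) (g : Fin 4), 0 ≤ W bu g) ∧
        ∀ A : Finset (Fin 4), AssignVal n W A (v A) := by
  rintro ⟨n, W, hW, hv⟩
  obtain ⟨b₀, hk, hl⟩ :=
    (hv {k}).exists_common_row_of_lt_add (hv {l}) (hv {k, l}) hW hkl (by linarith)
  have hi : ∀ t ≠ b₀, W t i ≤ v {i} - b := fun t ht => by
    linarith [(hv {i, k}).weight_add_weight_le ht hik (by simp) (by simp)]
  have hj : ∀ t ≠ b₀, W t j ≤ v {j} - c := fun t ht => by
    linarith [(hv {j, l}).weight_add_weight_le ht hjl (by simp) (by simp)]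
  have hbi : b ≤ v {i} := by linarith [(hv {k}).mono (hv {i, k}) (by simp)]
  have hcj : c ≤ v {j} := by linarith [(hv {l}).mono (hv {j, l}) (by simp)]
  have hpair := (hv {i, j}).le_add_sub_min hij b₀ ((hv {i}).weight_le b₀ (mem_singleton_self i))
    ((hv {j}).weight_le b₀ (mem_singleton_self j)) hi hj (by linarith) hbi hcj
  linarith [lt_min hab hac]

theorem case2_not_assignment_valuation
    (v : Finset (Fin 4) → ℝ) (hv0 : v ∅ = 0)
    (i j k l : Fin 4)
    (hij : i ≠ j) (hik : i ≠ k) (hil : i ≠ l) (hjk : j ≠ k) (hjl : j ≠ l) (hkl : k ≠ l)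
    (a b c : ℝ)
    (hdij : v {i} + v {j} - v {i, j} = a)
    (hdjk : v {j} + v {k} - v {j, k} = a)
    (hdkl : v {k} + v {l} - v {k, l} = a)
    (hdil : v {i} + v {l} - v {i, l} = a)
    (hdik : v {i} + v {k} - v {i, k} = b)
    (hdjl : v {j} + v {l} - v {j, l} = c)
    (ha : 0 < a) (hab : a < b) (hac : a < c) :
    ¬ ∃ (n : ℕ) (W : Fin n → Fin 4 → ℝ),
        (∀ (bu : Fin n) (g : Fin 4), 0 ≤ W bu g) ∧
        ∀ A : Finset (Fin 4), AssignVal n W A (v A) :=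
  case2_not_assignment_valuation_general v i j k l hij hik hjl hkl a b c hdij hdkl hdik hdjl ha hab
    hac
end

section
/- Let v̂ be a nondecreasing submodular valuation satisfying S3 on K goods, and let 0 ≤ L ≤ K. Then the L-satiation v of v̂, defined by v(A) = max over B ⊆ A with |B| ≤ L of v̂(B), is also nondecreasing, submodular, and satisfies S3. -/
open Finset

/-!
Submodularity together with S3 is the local form of M♮-concavity, and the proof runs through the
exchange property. Padding bundles of size at most `L` with dummy goods, on which `v̂` does not
depend, to size exactly `L` turns `v̂` into a function with Murota's four-point local exchange
property, and the usual local-to-global induction upgrades this to the full exchange property for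
sets of equal size. Back on the real goods: for bundles `S`, `T` of size at most `L` and
`x ∈ S \ T`, either `x` moves from `S` to `T` (an exchange with a dummy) or swaps with some
`y ∈ T \ S`, without decreasing `v̂ S + v̂ T`. Applied to optimal bundles for the two sets on the
left of the submodularity and S3 inequalities for `v`, the exchanged bundles are feasible for the
sets on the right. Submodularity of `v` then follows from its local version.
-/

section DoubleMax

variable {x y z : ℝ}

lemma DoubleMax.cases (h : DoubleMax x y z) :
    (x = y ∧ z ≤ x) ∨ (x = z ∧ y ≤ x) ∨ (y = z ∧ x ≤ y) := by
  unfold DoubleMax at h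
  grind

lemma doubleMax_of_le_max (hx : x ≤ max y z) (hy : y ≤ max x z) (hz : z ≤ max x y) :
    DoubleMax x y z := by
  unfold DoubleMax
  grind

end DoubleMax

variable {α β : Type*}

def IsSatiation (f : Finset α → ℝ) (L : ℕ) (v : Finset α → ℝ) : Prop :=
  ∀ A, IsGreatest {r | ∃ B ⊆ A, #B ≤ L ∧ r = f B} (v A)

namespace IsSatiation

variable {f v : Finset α → ℝ} {L : ℕ} (hv : IsSatiation f L v)
include hv

lemma le {A B : Finset α} (hBA : B ⊆ A) (hB : #B ≤ L) : f B ≤ v A :=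
  (hv A).2 ⟨B, hBA, hB, rfl⟩

lemma exists_eq (A : Finset α) : ∃ B ⊆ A, #B ≤ L ∧ v A = f B :=
  (hv A).1

lemma monotone : Monotone v := fun A A' hAA' => by
  obtain ⟨B, hBA, hB, hvB⟩ := hv.exists_eq A
  exact hvB ▸ hv.le (hBA.trans hAA') hB

end IsSatiation

variable [DecidableEq α] [DecidableEq β]

def IsSubmodular (f : Finset α → ℝ) : Prop :=
  ∀ A B : Finset α, f (A ∪ B) + f (A ∩ B) ≤ f A + f B

def SatisfiesS3 (f : Finset α → ℝ) : Prop :=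
  ∀ (A : Finset α) (i j k : α), i ∉ A → j ∉ A → k ∉ A → i ≠ j → i ≠ k → j ≠ k →
    DoubleMax (f (insert i (insert j A)) + f (insert k A))
              (f (insert i (insert k A)) + f (insert j A))
              (f (insert j (insert k A)) + f (insert i A))

/-- Murota's local exchange axiom for M-concave functions on sets of equal size. -/
def LocalExchange (g : Finset β → ℝ) : Prop :=
  ∀ (B : Finset β) (a i j k : β), a ∉ B → i ∉ B → j ∉ B → k ∉ B →
    a ≠ i → a ≠ j → a ≠ k → i ≠ j → i ≠ k → j ≠ k →
    g (insert a (insert i B)) + g (insert j (insert k B)) ≤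
      max (g (insert a (insert j B)) + g (insert i (insert k B)))
          (g (insert a (insert k B)) + g (insert i (insert j B)))

section Submodular

variable {f : Finset α → ℝ}

lemma IsSubmodular.insert_insert (hf : IsSubmodular f) (C : Finset α) {x y : α} (hxy : x ≠ y) :
    f (insert x (insert y C)) + f C ≤ f (insert x C) + f (insert y C) := by
  have h := hf (insert x C) (insert y C)
  rwa [show insert x C ∪ insert y C = insert x (insert y C) by grind,
    show insert x C ∩ insert y C = C by grind] at h

variable (hf : ∀ (C : Finset α) (x y : α), x ∉ C → y ∉ C → x ≠ y →
  f (insert x (insert y C)) + f C ≤ f (insert x C) + f (insert y C))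
include hf

lemma marginal_antitone_of_insert_insert {C C' : Finset α} (hCC' : C ⊆ C') {x : α}
    (hx : x ∉ C') : f (insert x C') + f C ≤ f (insert x C) + f C' := by
  obtain ⟨D, rfl, hCD⟩ : ∃ D, C' = C ∪ D ∧ Disjoint C D :=
    ⟨C' \ C, (union_sdiff_of_subset hCC').symm, disjoint_sdiff⟩
  clear hCC'
  induction D using Finset.induction_on with
  | empty => simp
  | insert z D hzD ih =>
    rw [disjoint_insert_right] at hCD
    rw [union_insert] at hx ⊢
    have hxz : x ≠ z := fun h => hx (h ▸ mem_insert_self _ _)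
    have := hf (C ∪ D) x z (fun h => hx (mem_insert_of_mem h))
      (by simp [hzD, hCD.1]) hxz
    have := ih hCD.2 (fun h => hx (mem_insert_of_mem h))
    linarith

lemma isSubmodular_of_insert_insert : IsSubmodular f := by
  suffices key : ∀ A D C : Finset α, Disjoint A D → C ⊆ A → f (A ∪ D) + f C ≤ f A + f (C ∪ D) by
    intro A B
    have := key A (B \ A) (A ∩ B) disjoint_sdiff inter_subset_left
    rw [union_sdiff_self_eq_union, show A ∩ B ∪ B \ A = B by grind] at this
    linarith
  intro A D C hAD hCA
  induction D using Finset.induction_on with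
  | empty => simp
  | insert z D hzD ih =>
    rw [disjoint_insert_right] at hAD
    rw [union_insert, union_insert]
    have := marginal_antitone_of_insert_insert hf (union_subset_union hCA (subset_refl D))
      (x := z) (by simp [hzD, hAD.1])
    have := ih hAD.2
    linarith

end Submodular

section S3

variable {f : Finset α → ℝ}

theorem SatisfiesS3.localExchange (hf : SatisfiesS3 f) : LocalExchange f := by
  intro B a i j k ha hi hj hk hai haj hak hij hik hjk
  rw [le_max_iff]
  by_contra! hcon
  have T1 := (hf B a i j ha hi hj hai haj hij).cases
  have T2 := (hf B a i k ha hi hk hai hak hik).cases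
  have T3 := (hf B j k a hj hk ha hjk haj.symm hak.symm).cases
  have T4 := (hf B j k i hj hk hi hjk hij.symm hik.symm).cases
  rw [insert_comm j a, insert_comm k a] at T3
  rw [insert_comm j i, insert_comm k i] at T4
  rcases T1 with ⟨_, _⟩ | ⟨_, _⟩ | ⟨_, _⟩ <;> rcases T2 with ⟨_, _⟩ | ⟨_, _⟩ | ⟨_, _⟩ <;>
    rcases T3 with ⟨_, _⟩ | ⟨_, _⟩ | ⟨_, _⟩ <;> rcases T4 with ⟨_, _⟩ | ⟨_, _⟩ | ⟨_, _⟩ <;>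
    linarith

/-- Goods in `β` are dummies: with one dummy S3 reduces to submodularity, with more its three
entries coincide. -/
theorem SatisfiesS3.comp_toLeft (hS3 : SatisfiesS3 f) (hsub : IsSubmodular f) :
    SatisfiesS3 (fun W : Finset (α ⊕ β) => f W.toLeft) := by
  intro B i j k hi hj hk hij hik hjk
  rcases i with i | i <;> rcases j with j | j <;> rcases k with k | k <;>
    simp only [toLeft_insert_inl, toLeft_insert_inr] <;>
    simp only [ne_eq, Sum.inl.injEq, reduceCtorEq, not_false_eq_true] at hij hik hjk
  · exact hS3 _ i j k (by simpa using hi) (by simpa using hj) (by simpa using hk) hij hik hjk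
  · have := hsub.insert_insert B.toLeft hij
    unfold DoubleMax; grind
  · have := hsub.insert_insert B.toLeft hik
    unfold DoubleMax; grind
  · unfold DoubleMax; grind
  · have := hsub.insert_insert B.toLeft hjk
    unfold DoubleMax; grind
  all_goals unfold DoubleMax; grind

end S3

section Exchange

variable {g : Finset β → ℝ}

lemma LocalExchange.add_le_of_gain_le (hg : LocalExchange g) {Y : Finset β} {a i j k : β}
    (ha : a ∉ Y) (hi : i ∉ Y) (hai : a ≠ i) (hj : j ∈ Y) (hk : k ∈ Y) (hjk : j ≠ k)
    (hmax : g (insert a (Y.erase j)) - g (insert i (Y.erase j)) ≤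
      g (insert a (Y.erase k)) - g (insert i (Y.erase k))) :
    g (insert i ((insert a (Y.erase k)).erase j)) + g Y ≤
      g (insert a (Y.erase k)) + g (insert i (Y.erase j)) := by
  set B := (Y.erase j).erase k
  have hYj : Y.erase j = insert k B := by grind
  have hYk : Y.erase k = insert j B := by grind
  have hY : Y = insert j (insert k B) := by grind
  have hX : insert i ((insert a (Y.erase k)).erase j) = insert a (insert i B) := by grind
  have h := hg B a i j k (by grind) (by grind) (by grind) (by grind) hai (by grind) (by grind)
    (by grind) (by grind) hjk
  rw [hX, hYj, hYk]
  rw [hYj, hYk] at hmax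
  rw [← hY] at h
  rcases le_max_iff.mp h with h | h <;> linarith

theorem LocalExchange.exists_exchange (hg : LocalExchange g) {X Y : Finset β}
    (hXY : #X = #Y) {i : β} (hi : i ∈ X \ Y) :
    ∃ j ∈ Y \ X, g X + g Y ≤ g (insert j (X.erase i)) + g (insert i (Y.erase j)) := by
  obtain ⟨n, hn⟩ : ∃ n, #(X \ Y) = n + 1 := Nat.exists_eq_add_one.mpr (card_pos.mpr ⟨i, hi⟩)
  induction n generalizing Y with
  | zero =>
    obtain ⟨j, hj⟩ := card_eq_one.mp ((card_sdiff_comm hXY).symm.trans hn)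
    have hXi : X \ Y = {i} := by
      obtain ⟨i', hi'⟩ := card_eq_one.mp hn
      rw [hi', mem_singleton] at hi
      rw [hi', hi]
    refine ⟨j, by simp [hj], le_of_eq ?_⟩
    simp only [Finset.ext_iff, mem_sdiff, mem_singleton] at hXi hj
    rw [show insert j (X.erase i) = Y by grind, show insert i (Y.erase j) = X by grind, add_comm]
  | succ n ih =>
    have hne : (((X \ Y).erase i) ×ˢ (Y \ X)).Nonempty := by
      refine Nonempty.product ?_ ?_
      · rw [← card_pos, card_erase_of_mem hi, hn]; omega
      · rw [← card_pos, ← card_sdiff_comm hXY, hn]; omega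
    -- swap in the `a ∈ X \ Y` and out the `k ∈ Y \ X` with the largest gain over swapping in `i`
    obtain ⟨⟨a, k⟩, hak, hmax⟩ := exists_max_image _
      (fun p => g (insert p.1 (Y.erase p.2)) - g (insert i (Y.erase p.2))) hne
    simp only [mem_product, mem_erase, mem_sdiff] at hak
    obtain ⟨⟨hai, haX, haY⟩, hkY, hkX⟩ := hak
    set Y' := insert a (Y.erase k)
    have hXY' : #X = #Y' := by
      rw [hXY, card_insert_of_notMem (by grind), card_erase_add_one hkY]
    have hn' : #(X \ Y') = n + 1 := by
      rw [show X \ Y' = (X \ Y).erase a by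
          ext; simp only [Y', mem_sdiff, mem_insert, mem_erase]; grind,
        card_erase_of_mem (mem_sdiff.mpr ⟨haX, haY⟩), hn, Nat.add_sub_cancel]
    obtain ⟨j, hj, hgj⟩ := ih hXY' (by grind) hn'
    have hjk : j ≠ k := by grind
    have hjY : j ∈ Y \ X := by grind
    refine ⟨j, hjY, ?_⟩
    have := hmax (a, j) (by simp only [mem_product, mem_erase, mem_sdiff]; grind)
    have := hg.add_le_of_gain_le haY (mem_sdiff.mp hi).2 hai (mem_sdiff.mp hjY).1 hkY hjk this
    linarith

end Exchange

section Padding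

lemma Finset.toLeft_erase_inl (u : Finset (α ⊕ β)) (a : α) :
    (u.erase (.inl a)).toLeft = u.toLeft.erase a := by
  ext; simp

lemma Finset.toLeft_erase_inr (u : Finset (α ⊕ β)) (b : β) :
    (u.erase (.inr b)).toLeft = u.toLeft := by
  ext; simp

variable {f : Finset α → ℝ}

theorem SatisfiesS3.exists_exchange_of_card_le (hS3 : SatisfiesS3 f) (hsub : IsSubmodular f)
    {L : ℕ} {S T : Finset α} (hS : #S ≤ L) (hT : #T ≤ L) {x : α} (hx : x ∈ S \ T) :
    (#(insert x T) ≤ L ∧ f S + f T ≤ f (S.erase x) + f (insert x T)) ∨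
      ∃ y ∈ T \ S, f S + f T ≤ f (insert y (S.erase x)) + f (insert x (T.erase y)) := by
  -- the dummy goods `inr d` pad `S` and `T` to size `L`; swapping `x` for a dummy moves it to `T`
  set X : Finset (α ⊕ ℕ) := S.disjSum (range (L - #S))
  set Y : Finset (α ⊕ ℕ) := T.disjSum (range (L - #T))
  have hXY : #X = #Y := by simp only [X, Y, card_disjSum, card_range]; omega
  obtain ⟨j, hj, hex⟩ := (hS3.comp_toLeft hsub).localExchange.exists_exchange hXY
    (i := .inl x) (by simpa [X, Y] using hx)
  rcases j with y | d
  · right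
    refine ⟨y, by simpa [X, Y] using hj, ?_⟩
    simpa [X, Y, toLeft_erase_inl] using hex
  · left
    have hd : d < L - #T := (by simpa [X, Y] using hj : _ ∧ _).1
    refine ⟨(card_insert_le _ _).trans (by omega), ?_⟩
    simpa [X, Y, toLeft_erase_inl, toLeft_erase_inr] using hex

end Padding

lemma Finset.card_insert_erase_le {s : Finset α} {a : α} (ha : a ∈ s) (b : α) :
    #(insert b (s.erase a)) ≤ #s :=
  (card_insert_le _ _).trans (card_erase_add_one ha).le

namespace IsSatiation

variable {f v : Finset α → ℝ} {L : ℕ} (hv : IsSatiation f L v)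
  (hS3 : SatisfiesS3 f) (hsub : IsSubmodular f)
include hv hS3 hsub

lemma insert_insert {C : Finset α} {x : α} (hx : x ∉ C) (y : α) :
    v (insert x (insert y C)) + v C ≤ v (insert x C) + v (insert y C) := by
  obtain ⟨S, hSA, hS, hvS⟩ := hv.exists_eq (insert x (insert y C))
  obtain ⟨T, hTA, hT, hvT⟩ := hv.exists_eq C
  rw [hvS, hvT]
  by_cases hxS : x ∈ S
  · rcases hS3.exists_exchange_of_card_le hsub hS hT (x := x) (by grind)
      with ⟨hcard, hex⟩ | ⟨z, hz, hex⟩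
    · linarith [hv.le (A := insert y C) (by grind) ((card_erase_le (a := x)).trans hS),
        hv.le (A := insert x C) (by grind) hcard]
    · linarith [hv.le (A := insert y C) (by grind) ((card_insert_erase_le hxS z).trans hS),
        hv.le (A := insert x C) (by grind) ((card_insert_erase_le (mem_sdiff.mp hz).1 x).trans hT)]
  · linarith [hv.le (A := insert y C) (by grind) hS, hv.le (A := insert x C) (by grind) hT]

lemma s3_le_max {A : Finset α} {i j k : α} (hi : i ∉ A) (hk : k ∉ A) (hik : i ≠ k) :
    v (insert i (insert j A)) + v (insert k A) ≤
      max (v (insert i (insert k A)) + v (insert j A))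
        (v (insert j (insert k A)) + v (insert i A)) := by
  obtain ⟨S, hSA, hS, hvS⟩ := hv.exists_eq (insert i (insert j A))
  obtain ⟨T, hTA, hT, hvT⟩ := hv.exists_eq (insert k A)
  rw [hvS, hvT]
  by_cases hiS : i ∈ S
  · by_cases hjS : j ∈ S
    · rcases hS3.exists_exchange_of_card_le hsub hS hT (x := i) (by grind)
        with ⟨hcard, hex⟩ | ⟨z, hz, hex⟩
      · refine le_max_of_le_left ?_
        linarith [hv.le (A := insert j A) (by grind) ((card_erase_le (a := i)).trans hS),
          hv.le (A := insert i (insert k A)) (by grind) hcard]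
      · have hS' := (card_insert_erase_le hiS z).trans hS
        have hT' := (card_insert_erase_le (mem_sdiff.mp hz).1 i).trans hT
        by_cases hzk : z = k
        · subst hzk
          refine le_max_of_le_right ?_
          linarith [hv.le (A := insert j (insert z A)) (by grind) hS',
            hv.le (A := insert i A) (by grind) hT']
        · refine le_max_of_le_left ?_
          linarith [hv.le (A := insert j A) (by grind) hS',
            hv.le (A := insert i (insert k A)) (by grind) hT']
    · refine le_max_of_le_right ?_
      linarith [hv.le (A := insert i A) (by grind) hS,
        hv.le (A := insert j (insert k A)) (by grind) hT]
  · refine le_max_of_le_left ?_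
    linarith [hv.le (A := insert j A) (by grind) hS,
      hv.le (A := insert i (insert k A)) (by grind) hT]

theorem isSubmodular : IsSubmodular v :=
  isSubmodular_of_insert_insert fun _ _ y hx _ _ => hv.insert_insert hS3 hsub hx y

theorem satisfiesS3 : SatisfiesS3 v := by
  intro A i j k hi hj hk hij hik _
  refine doubleMax_of_le_max (hv.s3_le_max hS3 hsub hi hk hik (j := j)) ?_ ?_
  · simpa only [insert_comm j i, insert_comm k j] using
      hv.s3_le_max hS3 hsub hi hj hij (j := k)
  · simpa only [insert_comm j i, insert_comm k i] using
      hv.s3_le_max hS3 hsub hj hi hij.symm (j := k)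

end IsSatiation

theorem Lsatiation_substitute_general {K : ℕ} (L : ℕ)
    (vhat v : Finset (Fin K) → ℝ)
    (hsub : ∀ A B : Finset (Fin K), vhat (A ∪ B) + vhat (A ∩ B) ≤ vhat A + vhat B)
    (hS3 : ∀ (A : Finset (Fin K)) (i j k : Fin K),
      i ∉ A → j ∉ A → k ∉ A → i ≠ j → i ≠ k → j ≠ k →
      DoubleMax (vhat (insert i (insert j A)) + vhat (insert k A))
                (vhat (insert i (insert k A)) + vhat (insert j A))
                (vhat (insert j (insert k A)) + vhat (insert i A)))
    (hv : ∀ A : Finset (Fin K),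
      IsGreatest {r : ℝ | ∃ B ⊆ A, B.card ≤ L ∧ r = vhat B} (v A)) :
    (∀ A B : Finset (Fin K), A ⊆ B → v A ≤ v B) ∧
    (∀ A B : Finset (Fin K), v (A ∪ B) + v (A ∩ B) ≤ v A + v B) ∧
    (∀ (A : Finset (Fin K)) (i j k : Fin K),
      i ∉ A → j ∉ A → k ∉ A → i ≠ j → i ≠ k → j ≠ k →
      DoubleMax (v (insert i (insert j A)) + v (insert k A))
                (v (insert i (insert k A)) + v (insert j A))
                (v (insert j (insert k A)) + v (insert i A))) := by
  have hv : IsSatiation vhat L v := hv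
  exact ⟨fun _ _ h => hv.monotone h, hv.isSubmodular hS3 hsub, hv.satisfiesS3 hS3 hsub⟩

theorem Lsatiation_substitute {K : ℕ} (L : ℕ) (hL : L ≤ K)
    (vhat v : Finset (Fin K) → ℝ)
    (hv0 : vhat ∅ = 0)
    (hmono : ∀ A B : Finset (Fin K), A ⊆ B → vhat A ≤ vhat B)
    (hsub : ∀ A B : Finset (Fin K), vhat (A ∪ B) + vhat (A ∩ B) ≤ vhat A + vhat B)
    (hS3 : ∀ (A : Finset (Fin K)) (i j k : Fin K),
      i ∉ A → j ∉ A → k ∉ A → i ≠ j → i ≠ k → j ≠ k →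
      DoubleMax (vhat (insert i (insert j A)) + vhat (insert k A))
                (vhat (insert i (insert k A)) + vhat (insert j A))
                (vhat (insert j (insert k A)) + vhat (insert i A)))
    (hv : ∀ A : Finset (Fin K),
      IsGreatest {r : ℝ | ∃ B ⊆ A, B.card ≤ L ∧ r = vhat B} (v A)) :
    (∀ A B : Finset (Fin K), A ⊆ B → v A ≤ v B) ∧
    (∀ A B : Finset (Fin K), v (A ∪ B) + v (A ∩ B) ≤ v A + v B) ∧
    (∀ (A : Finset (Fin K)) (i j k : Fin K),
      i ∉ A → j ∉ A → k ∉ A → i ≠ j → i ≠ k → j ≠ k →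
      DoubleMax (v (insert i (insert j A)) + v (insert k A))
                (v (insert i (insert k A)) + v (insert j A))
                (v (insert j (insert k A)) + v (insert i A))) :=
  Lsatiation_substitute_general L vhat v hsub hS3 hv
end

section
/- The valuation v̂ on four goods {i,j,k,l} defined by v̂(∅)=0, v̂ = 3 on singletons, v̂ = 4 on all two-element sets except v̂({k,l})=5, and v̂ = 5 on all sets of size ≥ 3, is nondecreasing and submodular, but its 2-satiation v(A) = max_{B⊆A, |B|≤2} v̂(B) is not submodular (in particular v(ijkl) − v(ijk) − v(ijl) + v(ij) > 0). -/
/-!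
The 2-satiation only sees pairs, so it is 5 on every set containing `{k, l}` and 4 on every other
set with at least two goods (goods `i, j, k, l` are `0, 1, 2, 3`). Neither `{i, j, k}` nor
`{i, j, l}` contains `{k, l}`, but their union does: `5 + 4 > 4 + 4` breaks submodularity.
-/

lemma satiation_eq_of_forall_le {α : Type*} {L : ℕ} {vhat : Finset α → ℝ} {A B₀ : Finset α}
    {x : ℝ} (h : IsGreatest {r : ℝ | ∃ B ⊆ A, B.card ≤ L ∧ r = vhat B} x)
    (hB₀ : B₀ ⊆ A) (hcard : B₀.card ≤ L) (hmax : ∀ B ⊆ A, B.card ≤ L → vhat B ≤ vhat B₀) :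
    x = vhat B₀ :=
  h.unique ⟨⟨B₀, hB₀, hcard, rfl⟩, by rintro r ⟨B, hB, hc, rfl⟩; exact hmax B hB hc⟩

def exampleValuation (A : Finset (Fin 4)) : ℕ :=
  if A.card ≤ 1 then 3 * A.card
  else if A = {2, 3} ∨ 3 ≤ A.card then 5 else 4

lemma exampleValuation_mono : Monotone exampleValuation := by
  unfold Monotone; decide

lemma exampleValuation_submodular (A B : Finset (Fin 4)) :
    exampleValuation (A ∪ B) + exampleValuation (A ∩ B) ≤
      exampleValuation A + exampleValuation B := by
  revert A B; decide

theorem satiation_not_submodular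
    (vhat v : Finset (Fin 4) → ℝ)
    (hvhat : ∀ A : Finset (Fin 4), vhat A =
      if A.card ≤ 1 then 3 * A.card
      else if A = {2, 3} ∨ 3 ≤ A.card then 5 else 4)
    (hv : ∀ A : Finset (Fin 4),
      IsGreatest {r : ℝ | ∃ B ⊆ A, B.card ≤ 2 ∧ r = vhat B} (v A)) :
    (∀ A B : Finset (Fin 4), A ⊆ B → vhat A ≤ vhat B) ∧
    (∀ A B : Finset (Fin 4), vhat (A ∪ B) + vhat (A ∩ B) ≤ vhat A + vhat B) ∧
    0 < v Finset.univ - v {0, 1, 2} - v {0, 1, 3} + v {0, 1} ∧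
    ¬ (∀ A B : Finset (Fin 4), v (A ∪ B) + v (A ∩ B) ≤ v A + v B) := by
  obtain rfl : vhat = fun A ↦ (exampleValuation A : ℝ) := funext fun A ↦ by
    simp [hvhat, exampleValuation]
  have v_eq (A B₀ : Finset (Fin 4)) (hB₀ : B₀ ⊆ A) (hcard : B₀.card ≤ 2)
      (hmax : ∀ B ⊆ A, B.card ≤ 2 → exampleValuation B ≤ exampleValuation B₀) :
      v A = exampleValuation B₀ :=
    satiation_eq_of_forall_le (hv A) hB₀ hcard fun B hB hc ↦ Nat.cast_le.mpr (hmax B hB hc)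
  have v_ijkl : v Finset.univ = 5 := v_eq _ {2, 3} (by decide) (by decide) (by decide)
  have v_ijk : v {0, 1, 2} = 4 := v_eq _ {0, 1} (by decide) (by decide) (by decide)
  have v_ijl : v {0, 1, 3} = 4 := v_eq _ {0, 1} (by decide) (by decide) (by decide)
  have v_ij : v {0, 1} = 4 := v_eq _ {0, 1} (by decide) (by decide) (by decide)
  have gap : 0 < v Finset.univ - v {0, 1, 2} - v {0, 1, 3} + v {0, 1} := by
    rw [v_ijkl, v_ijk, v_ijl, v_ij]; norm_num
  refine ⟨fun A B h ↦ Nat.cast_le.mpr (exampleValuation_mono h),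
    fun A B ↦ by beta_reduce; exact_mod_cast exampleValuation_submodular A B, gap, fun h ↦ ?_⟩
  have submod := h {0, 1, 2} {0, 1, 3}
  rw [show ({0, 1, 2} ∪ {0, 1, 3} : Finset (Fin 4)) = Finset.univ by decide,
    show ({0, 1, 2} ∩ {0, 1, 3} : Finset (Fin 4)) = {0, 1} by decide] at submod
  linarith
end

section
/- Let K ≥ 2. Let C be a collection of subsets A of {1,...,K} with 2 ≤ |A| ≤ K−1, |A| even, and such that any two distinct A, A' ∈ C with |A|=|A'| have Hamming distance d_H(A,A') = |A \ A'| + |A' \ A| ≥ 4. Let α_1,...,α_K ∈ [0,1], β_2,...,β_K ∈ [0,1] with β_0=β_1=0, and γ_A ∈ [0,1] for A ∈ C. Define θ(A) = β_{|A|} + γ_A·1_{A∈C} + 1.5·|A|(|A|−1) for |A| ≥ 2 and θ(A)=0 for |A| ≤ 1, and μ_k = 3K−1+α_k. Then the valuation v(A) = Σ_{k∈A} μ_k − θ(A) is nondecreasing, submodular, and satisfies S3 (i.e., is a nondecreasing substitute valuation). -/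
lemma dm12 {x y z : ℝ} (h : x = y) (hz : z ≤ x) : DoubleMax x y z := by
  subst h
  have h1 : max x (max x z) = x := by rw [max_eq_left hz, max_self]
  exact Or.inl ⟨h1.symm, h1.symm⟩

lemma dm13 {x y z : ℝ} (h : x = z) (hy : y ≤ x) : DoubleMax x y z := by
  subst h
  have h1 : max x (max y x) = x := by rw [max_eq_right hy, max_self]
  exact Or.inr (Or.inl ⟨h1.symm, h1.symm⟩)

lemma dm23 {x y z : ℝ} (h : y = z) (hx : x ≤ y) : DoubleMax x y z := by
  subst h
  have h1 : max x (max y y) = y := by rw [max_self, max_eq_right hx]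
  exact Or.inr (Or.inr ⟨h1.symm, h1.symm⟩)

lemma pair_not_both {K : ℕ} {C : Finset (Finset (Fin K))}
    (hC2 : ∀ A ∈ C, ∀ A' ∈ C, A ≠ A' → A.card = A'.card →
      4 ≤ (A \ A').card + (A' \ A).card)
    {B : Finset (Fin K)} {x y : Fin K} (hx : x ∉ B) (hy : y ∉ B) (hxy : x ≠ y)
    (h1 : insert x B ∈ C) (h2 : insert y B ∈ C) : False := by
  have hne : insert x B ≠ insert y B := by
    intro h
    have hmem : x ∈ insert y B := h ▸ Finset.mem_insert_self x B
    rcases Finset.mem_insert.1 hmem with h' | h'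
    exacts [hxy h', hx h']
  have hcard : (insert x B).card = (insert y B).card := by
    rw [Finset.card_insert_of_notMem hx, Finset.card_insert_of_notMem hy]
  have hd1 : insert x B \ insert y B = {x} := by
    ext a
    simp only [Finset.mem_sdiff, Finset.mem_insert, Finset.mem_singleton, not_or]
    constructor
    · rintro ⟨h | h, _, hab⟩
      · exact h
      · exact absurd h hab
    · rintro rfl
      exact ⟨Or.inl rfl, hxy, hx⟩
  have hd2 : insert y B \ insert x B = {y} := by
    ext a
    simp only [Finset.mem_sdiff, Finset.mem_insert, Finset.mem_singleton, not_or]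
    constructor
    · rintro ⟨h | h, _, hab⟩
      · exact h
      · exact absurd h hab
    · rintro rfl
      exact ⟨Or.inl rfl, hxy.symm, hy⟩
  have := hC2 _ h1 _ h2 hne hcard
  rw [hd1, hd2] at this
  simp at this

theorem speckled_valuations_substitute {K : ℕ} (hK : 2 ≤ K)
    (C : Finset (Finset (Fin K)))
    (hC1 : ∀ A ∈ C, 2 ≤ A.card ∧ A.card ≤ K - 1 ∧ Even A.card)
    (hC2 : ∀ A ∈ C, ∀ A' ∈ C, A ≠ A' → A.card = A'.card →
      4 ≤ (A \ A').card + (A' \ A).card)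
    (α : Fin K → ℝ) (hα : ∀ k, 0 ≤ α k ∧ α k ≤ 1)
    (β : ℕ → ℝ) (hβ : ∀ n, 0 ≤ β n ∧ β n ≤ 1) (hβ0 : β 0 = 0) (hβ1 : β 1 = 0)
    (γ : Finset (Fin K) → ℝ) (hγ : ∀ A ∈ C, 0 ≤ γ A ∧ γ A ≤ 1)
    (θ v : Finset (Fin K) → ℝ)
    (hθ : ∀ A : Finset (Fin K),
      θ A = β A.card + (if A ∈ C then γ A else 0)
        + 1.5 * (A.card : ℝ) * ((A.card : ℝ) - 1))
    (hv : ∀ A : Finset (Fin K),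
      v A = (∑ k ∈ A, (3 * (K : ℝ) - 1 + α k)) - θ A) :
    (∀ A B : Finset (Fin K), A ⊆ B → v A ≤ v B) ∧
    (∀ A B : Finset (Fin K), v (A ∪ B) + v (A ∩ B) ≤ v A + v B) ∧
    (∀ (A : Finset (Fin K)) (i j k : Fin K),
      i ∉ A → j ∉ A → k ∉ A → i ≠ j → i ≠ k → j ≠ k →
      DoubleMax (v (insert i (insert j A)) + v (insert k A))
                (v (insert i (insert k A)) + v (insert j A))
                (v (insert j (insert k A)) + v (insert i A))) := by
  have hite0 : ∀ S : Finset (Fin K), 0 ≤ (if S ∈ C then γ S else 0) := by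
    intro S; split_ifs with h
    · exact (hγ _ h).1
    · exact le_refl 0
  have hite1 : ∀ S : Finset (Fin K), (if S ∈ C then γ S else 0) ≤ 1 := by
    intro S; split_ifs with h
    · exact (hγ _ h).2
    · exact zero_le_one
  refine ⟨?_, ?_, ?_⟩
  · -- monotone
    intro A B hAB
    by_cases hd0 : (B \ A).card = 0
    · have : A = B := by
        have hBA : B ⊆ A := by
          intro x hx
          by_contra hxA
          have : x ∈ B \ A := Finset.mem_sdiff.2 ⟨hx, hxA⟩
          have := Finset.card_pos.2 ⟨x, this⟩
          omega
        exact Finset.Subset.antisymm hAB hBA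
      rw [this]
    · have hd1 : 1 ≤ (B \ A).card := Nat.one_le_iff_ne_zero.2 hd0
      have hmn : A.card + (B \ A).card = B.card := by
        rw [Finset.card_sdiff_of_subset hAB]
        have := Finset.card_le_card hAB
        omega
      have hmK : B.card ≤ K := by
        have := Finset.card_le_univ B
        simpa using this
      rw [hv A, hv B, hθ A, hθ B]
      have hsum : (∑ k ∈ B, (3 * (K : ℝ) - 1 + α k))
          = (∑ k ∈ B \ A, (3 * (K : ℝ) - 1 + α k)) + ∑ k ∈ A, (3 * (K : ℝ) - 1 + α k) :=
        (Finset.sum_sdiff hAB).symm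
      have hlb : ((B \ A).card : ℝ) * (3 * (K : ℝ) - 1)
          ≤ ∑ k ∈ B \ A, (3 * (K : ℝ) - 1 + α k) := by
        have := Finset.card_nsmul_le_sum (B \ A) (fun k => 3 * (K : ℝ) - 1 + α k)
          (3 * (K : ℝ) - 1) (fun x _ => le_add_of_nonneg_right (hα x).1)
        simpa [nsmul_eq_mul] using this
      have hb1 := (hβ A.card).1
      have hb2 := (hβ B.card).2
      have hiA := hite0 A
      have hiB := hite1 B
      have key : 2 + 1.5 * (B.card : ℝ) * ((B.card : ℝ) - 1)
          - 1.5 * (A.card : ℝ) * ((A.card : ℝ) - 1)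
          ≤ ((B \ A).card : ℝ) * (3 * (K : ℝ) - 1) := by
        have e1 : (A.card : ℝ) + ((B \ A).card : ℝ) = (B.card : ℝ) := by
          exact_mod_cast hmn
        have e2 : (B.card : ℝ) ≤ (K : ℝ) := by exact_mod_cast hmK
        have e3 : (1 : ℝ) ≤ ((B \ A).card : ℝ) := by exact_mod_cast hd1
        have e4 : (0 : ℝ) ≤ (A.card : ℝ) := Nat.cast_nonneg _
        nlinarith [mul_nonneg (sub_nonneg.2 e3) (le_trans zero_le_one e3),
          mul_le_mul_of_nonneg_right e2 (le_trans zero_le_one e3), sq_nonneg ((B \ A).card : ℝ)]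
      rw [hsum]
      linarith
  · -- submodular
    intro A B
    rw [hv A, hv B, hv (A ∪ B), hv (A ∩ B)]
    have hsum := Finset.sum_union_inter (s₁ := A) (s₂ := B) (f := fun k => 3 * (K : ℝ) - 1 + α k)
    by_cases hAB : A ⊆ B
    · rw [Finset.union_eq_right.2 hAB, Finset.inter_eq_left.2 hAB]
      linarith [hsum]
    · by_cases hBA : B ⊆ A
      · rw [Finset.union_eq_left.2 hBA, Finset.inter_eq_right.2 hBA]
      · -- both differences nonempty
        have hp : 1 ≤ (A \ B).card :=
          Finset.card_pos.2 (Finset.sdiff_nonempty.2 hAB)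
        have hq : 1 ≤ (B \ A).card :=
          Finset.card_pos.2 (Finset.sdiff_nonempty.2 hBA)
        have hcA : (A \ B).card + (A ∩ B).card = A.card :=
          Finset.card_sdiff_add_card_inter A B
        have hcB : (B \ A).card + (A ∩ B).card = B.card := by
          have := Finset.card_sdiff_add_card_inter B A
          rwa [Finset.inter_comm] at this
        have hcU : (A ∪ B).card + (A ∩ B).card = A.card + B.card :=
          Finset.card_union_add_card_inter A B
        have hUeq : (A ∪ B).card = (A \ B).card + (B \ A).card + (A ∩ B).card := by omega
        rw [hθ A, hθ B, hθ (A ∪ B), hθ (A ∩ B)]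
        have quad : 1.5 * ((A ∪ B).card : ℝ) * (((A ∪ B).card : ℝ) - 1)
            + 1.5 * ((A ∩ B).card : ℝ) * (((A ∩ B).card : ℝ) - 1)
            = 1.5 * (A.card : ℝ) * ((A.card : ℝ) - 1)
            + 1.5 * (B.card : ℝ) * ((B.card : ℝ) - 1)
            + 3 * ((A \ B).card : ℝ) * ((B \ A).card : ℝ) := by
          have e1 : (A.card : ℝ) = ((A \ B).card : ℝ) + ((A ∩ B).card : ℝ) := by
            exact_mod_cast hcA.symm
          have e2 : (B.card : ℝ) = ((B \ A).card : ℝ) + ((A ∩ B).card : ℝ) := by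
            exact_mod_cast hcB.symm
          have e3 : ((A ∪ B).card : ℝ) = ((A \ B).card : ℝ) + ((B \ A).card : ℝ)
              + ((A ∩ B).card : ℝ) := by exact_mod_cast hUeq
          rw [e1, e2, e3]; ring
        have hbA := (hβ A.card).2
        have hbB := (hβ B.card).2
        have hbU := (hβ (A ∪ B).card).1
        have hbI := (hβ (A ∩ B).card).1
        have hiU := hite0 (A ∪ B)
        have hiI := hite0 (A ∩ B)
        by_cases hpq : (A \ B).card = 1 ∧ (B \ A).card = 1
        · -- Hamming distance 2: at most one of A, B in C
          have hcard : A.card = B.card := by omega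
          have hne : A ≠ B := by
            intro h
            rw [h] at hp
            simp at hp
          have hnotboth : ¬ (A ∈ C ∧ B ∈ C) := by
            rintro ⟨h1, h2⟩
            have := hC2 _ h1 _ h2 hne hcard
            omega
          have hAB1 : (if A ∈ C then γ A else 0) + (if B ∈ C then γ B else 0) ≤ 1 := by
            by_cases h1 : A ∈ C
            · have h2 : B ∉ C := fun h => hnotboth ⟨h1, h⟩
              rw [if_pos h1, if_neg h2]
              linarith [(hγ _ h1).2]
            · rw [if_neg h1]
              linarith [hite1 B]
          have hpq3 : 3 * ((A \ B).card : ℝ) * ((B \ A).card : ℝ) = 3 := by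
            rw [hpq.1, hpq.2]; norm_num
          linarith
        · have h2pq : 2 ≤ (A \ B).card * (B \ A).card := by
            rcases Nat.lt_or_ge ((A \ B).card) 2 with h | h
            · have hp1 : (A \ B).card = 1 := by omega
              have hq2 : 2 ≤ (B \ A).card := by
                rcases Nat.lt_or_ge ((B \ A).card) 2 with h' | h'
                · exact absurd ⟨hp1, by omega⟩ hpq
                · exact h'
              calc 2 ≤ (B \ A).card := hq2
                _ = (A \ B).card * (B \ A).card := by rw [hp1, one_mul]
            · calc 2 ≤ (A \ B).card := h
                _ ≤ (A \ B).card * (B \ A).card := Nat.le_mul_of_pos_right _ hq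
          have h2pq' : (2 : ℝ) ≤ ((A \ B).card : ℝ) * ((B \ A).card : ℝ) := by
            exact_mod_cast h2pq
          linarith [hite1 A, hite1 B]
  · -- S3
    intro A i j k hi hj hk hij hik hjk
    have hpair : ∀ x y : Fin K, x ∉ A → y ∉ A → x ≠ y →
        v (insert x (insert y A)) = (∑ m ∈ A, (3 * (K : ℝ) - 1 + α m))
          + (3 * (K : ℝ) - 1 + α x) + (3 * (K : ℝ) - 1 + α y)
          - β (A.card + 2)
          - (if insert x (insert y A) ∈ C then γ (insert x (insert y A)) else 0)
          - 1.5 * ((A.card : ℝ) + 2) * ((A.card : ℝ) + 1) := by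
      intro x y hx hy hxy
      have hxyA : x ∉ insert y A := by
        simp only [Finset.mem_insert, not_or]; exact ⟨hxy, hx⟩
      have hcard : (insert x (insert y A)).card = A.card + 2 := by
        rw [Finset.card_insert_of_notMem hxyA, Finset.card_insert_of_notMem hy]
      rw [hv, hθ, Finset.sum_insert hxyA, Finset.sum_insert hy, hcard]
      push_cast
      ring
    have hsingle : ∀ x : Fin K, x ∉ A →
        v (insert x A) = (∑ m ∈ A, (3 * (K : ℝ) - 1 + α m)) + (3 * (K : ℝ) - 1 + α x)
          - β (A.card + 1)
          - (if insert x A ∈ C then γ (insert x A) else 0)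
          - 1.5 * ((A.card : ℝ) + 1) * (A.card : ℝ) := by
      intro x hx
      have hcard : (insert x A).card = A.card + 1 := Finset.card_insert_of_notMem hx
      rw [hv, hθ, Finset.sum_insert hx, hcard]
      push_cast
      ring
    -- parity exclusion: pair-set and single-set cannot both be in C
    have hps : ∀ x y z : Fin K, x ∉ A → y ∉ A → z ∉ A → x ≠ y →
        insert x (insert y A) ∈ C → insert z A ∈ C → False := by
      intro x y z hx hy hz hxy h1 h2
      have hxyA : x ∉ insert y A := by
        simp only [Finset.mem_insert, not_or]; exact ⟨hxy, hx⟩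
      have e1 : Even (insert x (insert y A)).card := (hC1 _ h1).2.2
      have e2 : Even (insert z A).card := (hC1 _ h2).2.2
      rw [Finset.card_insert_of_notMem hxyA, Finset.card_insert_of_notMem hy] at e1
      rw [Finset.card_insert_of_notMem hz] at e2
      rcases e1 with ⟨r, hr⟩
      rcases e2 with ⟨s, hs⟩
      omega
    have hjiA : j ∉ insert i A := by
      simp only [Finset.mem_insert, not_or]; exact ⟨hij.symm, hj⟩
    have hkiA : k ∉ insert i A := by
      simp only [Finset.mem_insert, not_or]; exact ⟨hik.symm, hk⟩
    have hijA : i ∉ insert j A := by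
      simp only [Finset.mem_insert, not_or]; exact ⟨hij, hi⟩
    have hkjA : k ∉ insert j A := by
      simp only [Finset.mem_insert, not_or]; exact ⟨hjk.symm, hk⟩
    have hikA : i ∉ insert k A := by
      simp only [Finset.mem_insert, not_or]; exact ⟨hik, hi⟩
    have hjkA : j ∉ insert k A := by
      simp only [Finset.mem_insert, not_or]; exact ⟨hjk, hj⟩
    -- pair-pair exclusions
    have hij_ik : insert i (insert j A) ∈ C → insert i (insert k A) ∈ C → False := by
      intro h1 h2
      rw [Finset.insert_comm] at h1 h2
      exact pair_not_both hC2 hjiA hkiA hjk h1 h2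
    have hij_jk : insert i (insert j A) ∈ C → insert j (insert k A) ∈ C → False := by
      intro h1 h2
      rw [Finset.insert_comm] at h2
      exact pair_not_both hC2 hijA hkjA hik h1 h2
    have hik_jk : insert i (insert k A) ∈ C → insert j (insert k A) ∈ C → False := by
      intro h1 h2
      exact pair_not_both hC2 hikA hjkA hij h1 h2
    -- single-single exclusions
    have hsi_sj : insert i A ∈ C → insert j A ∈ C → False :=
      fun h1 h2 => pair_not_both hC2 hi hj hij h1 h2
    have hsi_sk : insert i A ∈ C → insert k A ∈ C → False :=
      fun h1 h2 => pair_not_both hC2 hi hk hik h1 h2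
    have hsj_sk : insert j A ∈ C → insert k A ∈ C → False :=
      fun h1 h2 => pair_not_both hC2 hj hk hjk h1 h2
    rw [hpair i j hi hj hij, hpair i k hi hk hik, hpair j k hj hk hjk,
      hsingle i hi, hsingle j hj, hsingle k hk]
    by_cases c1 : insert i (insert j A) ∈ C
    · have n2 : insert i (insert k A) ∉ C := fun h => hij_ik c1 h
      have n3 : insert j (insert k A) ∉ C := fun h => hij_jk c1 h
      have m1 : insert i A ∉ C := fun h => hps i j i hi hj hi hij c1 h
      have m2 : insert j A ∉ C := fun h => hps i j j hi hj hj hij c1 h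
      have m3 : insert k A ∉ C := fun h => hps i j k hi hj hk hij c1 h
      rw [if_pos c1, if_neg n2, if_neg n3, if_neg m1, if_neg m2, if_neg m3]
      apply dm23
      · ring
      · linarith [(hγ _ c1).1]
    · by_cases c2 : insert i (insert k A) ∈ C
      · have n3 : insert j (insert k A) ∉ C := fun h => hik_jk c2 h
        have m1 : insert i A ∉ C := fun h => hps i k i hi hk hi hik c2 h
        have m2 : insert j A ∉ C := fun h => hps i k j hi hk hj hik c2 h
        have m3 : insert k A ∉ C := fun h => hps i k k hi hk hk hik c2 h
        rw [if_neg c1, if_pos c2, if_neg n3, if_neg m1, if_neg m2, if_neg m3]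
        apply dm13
        · ring
        · linarith [(hγ _ c2).1]
      · by_cases c3 : insert j (insert k A) ∈ C
        · have m1 : insert i A ∉ C := fun h => hps j k i hj hk hi hjk c3 h
          have m2 : insert j A ∉ C := fun h => hps j k j hj hk hj hjk c3 h
          have m3 : insert k A ∉ C := fun h => hps j k k hj hk hk hjk c3 h
          rw [if_neg c1, if_neg c2, if_pos c3, if_neg m1, if_neg m2, if_neg m3]
          apply dm12
          · ring
          · linarith [(hγ _ c3).1]
        · rw [if_neg c1, if_neg c2, if_neg c3]
          by_cases s1 : insert k A ∈ C
          · have m1 : insert i A ∉ C := fun h => hsi_sk h s1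
            have m2 : insert j A ∉ C := fun h => hsj_sk h s1
            rw [if_pos s1, if_neg m1, if_neg m2]
            apply dm23
            · ring
            · linarith [(hγ _ s1).1]
          · by_cases s2 : insert j A ∈ C
            · have m1 : insert i A ∉ C := fun h => hsi_sj h s2
              rw [if_neg s1, if_pos s2, if_neg m1]
              apply dm13
              · ring
              · linarith [(hγ _ s2).1]
            · by_cases s3 : insert i A ∈ C
              · rw [if_neg s1, if_neg s2, if_pos s3]
                apply dm12
                · ring
                · linarith [(hγ _ s3).1]
              · rw [if_neg s1, if_neg s2, if_neg s3]
                apply dm12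
                · ring
                · apply le_of_eq; ring
end

section
/- With the setup of speckled valuations (given fixed C), for every bundle A and distinct goods i,j,k ∉ A, at most one of the six sets Ai, Aj, Ak, Aij, Aik, Ajk belongs to C; consequently the triple (θ(Aij)+θ(Ak), θ(Aik)+θ(Aj), θ(Ajk)+θ(Ai)) has at least two entries equal to its minimum. -/
open Finset

lemma doubleMin_add_of_two_eq_zero {m a b c : ℝ} (ha : 0 ≤ a) (hb : 0 ≤ b) (hc : 0 ≤ c)
    (hab : a = 0 ∨ b = 0) (hac : a = 0 ∨ c = 0) (hbc : b = 0 ∨ c = 0) :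
    DoubleMin (m + a) (m + b) (m + c) := by
  have : (a = 0 ∧ b = 0) ∨ (a = 0 ∧ c = 0) ∨ (b = 0 ∧ c = 0) := by tauto
  unfold DoubleMin
  rcases this with ⟨rfl, rfl⟩ | ⟨rfl, rfl⟩ | ⟨rfl, rfl⟩ <;> simp [*]

section Speckled

variable {α : Type*} [DecidableEq α]

lemma card_sdiff_add_card_sdiff_le_card_sdiff {B T X Y : Finset α}
    (hBX : B ⊆ X) (hXT : X ⊆ T) (hBY : B ⊆ Y) (hYT : Y ⊆ T) :
    #(X \ Y) + #(Y \ X) ≤ #(T \ B) := by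
  rw [← card_union_of_disjoint disjoint_sdiff_sdiff]
  exact card_le_card (union_subset (sdiff_subset_sdiff hXT hBY) (sdiff_subset_sdiff hYT hBX))

lemma ssubset_insert_ssubset_of_mem_sdiff {A T : Finset α} {x : α} (hAT : A ⊆ T)
    (hT : #A + 2 ≤ #T) (hx : x ∈ T \ A) : A ⊂ insert x A ∧ insert x A ⊂ T := by
  obtain ⟨hxT, hxA⟩ := mem_sdiff.1 hx
  refine ⟨ssubset_insert hxA, ssubset_of_subset_of_ne (insert_subset hxT hAT) fun h => ?_⟩
  have := congrArg card h
  rw [card_insert_of_notMem hxA] at this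
  omega

lemma ssubset_erase_ssubset_of_mem_sdiff {A T : Finset α} {x : α} (hAT : A ⊆ T)
    (hT : #A + 2 ≤ #T) (hx : x ∈ T \ A) : A ⊂ T.erase x ∧ T.erase x ⊂ T := by
  obtain ⟨hxT, hxA⟩ := mem_sdiff.1 hx
  refine ⟨ssubset_of_subset_of_ne (subset_erase.2 ⟨hAT, hxA⟩) fun h => ?_, erase_ssubset hxT⟩
  have := congrArg card h
  rw [card_erase_of_mem hxT] at this
  omega

variable {C : Finset (Finset α)}

lemma eq_of_mem_of_ssubset_of_ssubset (heven : ∀ X ∈ C, Even #X)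
    (hsep : ∀ X ∈ C, ∀ Y ∈ C, X ≠ Y → #X = #Y → 4 ≤ #(X \ Y) + #(Y \ X))
    {B T X Y : Finset α} (hT : #T ≤ #B + 3) (hBX : B ⊂ X) (hXT : X ⊂ T) (hBY : B ⊂ Y)
    (hYT : Y ⊂ T) (hX : X ∈ C) (hY : Y ∈ C) : X = Y := by
  by_contra hne
  -- only one of `#B + 1`, `#B + 2` is even
  have hcard : #X = #Y := by
    obtain ⟨a, ha⟩ := heven X hX
    obtain ⟨b, hb⟩ := heven Y hY
    have := card_lt_card hBX; have := card_lt_card hXT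
    have := card_lt_card hBY; have := card_lt_card hYT
    omega
  have hdist := card_sdiff_add_card_sdiff_le_card_sdiff hBX.subset hXT.subset hBY.subset hYT.subset
  rw [card_sdiff_of_subset (hBX.subset.trans hXT.subset)] at hdist
  have := hsep X hX Y hY hne hcard
  omega

lemma card_filter_mem_le_one_of_ssubset (heven : ∀ X ∈ C, Even #X)
    (hsep : ∀ X ∈ C, ∀ Y ∈ C, X ≠ Y → #X = #Y → 4 ≤ #(X \ Y) + #(Y \ X))
    {B T : Finset α} (hT : #T ≤ #B + 3) {S : Finset (Finset α)}
    (hS : ∀ X ∈ S, B ⊂ X ∧ X ⊂ T) : #(S.filter (· ∈ C)) ≤ 1 := by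
  refine card_le_one.2 fun X hX Y hY => ?_
  rw [mem_filter] at hX hY
  exact eq_of_mem_of_ssubset_of_ssubset heven hsep hT (hS X hX.1).1 (hS X hX.1).2
    (hS Y hY.1).1 (hS Y hY.1).2 hX.2 hY.2

/-- The term `γ_X · 1_{X ∈ C}` of `θ`. -/
def speck (C : Finset (Finset α)) (γ : Finset α → ℝ) (X : Finset α) : ℝ :=
  if X ∈ C then γ X else 0

lemma speck_nonneg {γ : Finset α → ℝ} (hγ : ∀ X ∈ C, 0 ≤ γ X) (X : Finset α) :
    0 ≤ speck C γ X := by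
  unfold speck
  split_ifs with h
  exacts [hγ X h, le_rfl]

lemma mem_or_mem_of_speck_add_ne_zero {γ : Finset α → ℝ} {X Y : Finset α}
    (h : speck C γ X + speck C γ Y ≠ 0) : X ∈ C ∨ Y ∈ C := by
  by_contra! hXY
  simp [speck, hXY] at h

lemma speck_pair_eq_zero_or (heven : ∀ X ∈ C, Even #X)
    (hsep : ∀ X ∈ C, ∀ Y ∈ C, X ≠ Y → #X = #Y → 4 ≤ #(X \ Y) + #(Y \ X))
    (γ : Finset α → ℝ) {A T : Finset α} (hAT : A ⊆ T) (hT : #T = #A + 3) {x y : α}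
    (hx : x ∈ T \ A) (hy : y ∈ T \ A) (hxy : x ≠ y) :
    speck C γ (T.erase x) + speck C γ (insert x A) = 0 ∨
      speck C γ (T.erase y) + speck C γ (insert y A) = 0 := by
  by_contra! ⟨hxC, hyC⟩
  obtain ⟨hxT, hxA⟩ := mem_sdiff.1 hx
  obtain ⟨hyT, hyA⟩ := mem_sdiff.1 hy
  have hT2 : #A + 2 ≤ #T := by omega
  obtain ⟨hAXi, hXiT⟩ := ssubset_insert_ssubset_of_mem_sdiff hAT hT2 hx
  obtain ⟨hAXe, hXeT⟩ := ssubset_erase_ssubset_of_mem_sdiff hAT hT2 hx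
  obtain ⟨hAYi, hYiT⟩ := ssubset_insert_ssubset_of_mem_sdiff hAT hT2 hy
  obtain ⟨hAYe, hYeT⟩ := ssubset_erase_ssubset_of_mem_sdiff hAT hT2 hy
  have heq : ∀ {X Y}, A ⊂ X → X ⊂ T → A ⊂ Y → Y ⊂ T → X ∈ C → Y ∈ C → X = Y :=
    eq_of_mem_of_ssubset_of_ssubset heven hsep hT.le
  rcases mem_or_mem_of_speck_add_ne_zero hxC with hX | hX <;>
    rcases mem_or_mem_of_speck_add_ne_zero hyC with hY | hY
  · have : y ∈ T.erase x := mem_erase.2 ⟨hxy.symm, hyT⟩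
    simp [heq hAXe hXeT hAYe hYeT hX hY] at this
  · have h := congrArg card (heq hAXe hXeT hAYi hYiT hX hY)
    rw [card_erase_of_mem hxT, card_insert_of_notMem hyA] at h
    omega
  · have h := congrArg card (heq hAXi hXiT hAYe hYeT hX hY)
    rw [card_erase_of_mem hyT, card_insert_of_notMem hxA] at h
    omega
  · have : x ∈ insert y A := heq hAXi hXiT hAYi hYiT hX hY ▸ mem_insert_self x A
    simp [hxy, hxA] at this

lemma doubleMin_pair_sums (heven : ∀ X ∈ C, Even #X)
    (hsep : ∀ X ∈ C, ∀ Y ∈ C, X ≠ Y → #X = #Y → 4 ≤ #(X \ Y) + #(Y \ X))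
    {γ : Finset α → ℝ} (hγ : ∀ X ∈ C, 0 ≤ γ X) (g : ℕ → ℝ) {θ : Finset α → ℝ}
    (hθ : ∀ X, θ X = g #X + speck C γ X) {A T : Finset α} (hAT : A ⊆ T) (hT : #T = #A + 3)
    {x y z : α} (hx : x ∈ T \ A) (hy : y ∈ T \ A) (hz : z ∈ T \ A)
    (hxy : x ≠ y) (hxz : x ≠ z) (hyz : y ≠ z) :
    DoubleMin (θ (T.erase x) + θ (insert x A)) (θ (T.erase y) + θ (insert y A))
      (θ (T.erase z) + θ (insert z A)) := by
  have hpair : ∀ w ∈ T \ A, θ (T.erase w) + θ (insert w A) =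
      g (#A + 2) + g (#A + 1) + (speck C γ (T.erase w) + speck C γ (insert w A)) := by
    intro w hw
    rw [hθ, hθ, card_erase_of_mem (mem_sdiff.1 hw).1, card_insert_of_notMem (mem_sdiff.1 hw).2,
      hT, show #A + 3 - 1 = #A + 2 by omega]
    ring
  have hs := speck_nonneg hγ
  rw [hpair x hx, hpair y hy, hpair z hz]
  exact doubleMin_add_of_two_eq_zero (add_nonneg (hs _) (hs _)) (add_nonneg (hs _) (hs _))
    (add_nonneg (hs _) (hs _)) (speck_pair_eq_zero_or heven hsep γ hAT hT hx hy hxy)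
    (speck_pair_eq_zero_or heven hsep γ hAT hT hx hz hxz)
    (speck_pair_eq_zero_or heven hsep γ hAT hT hy hz hyz)

end Speckled

theorem speckled_at_most_one_speck_general {K : ℕ}
    (C : Finset (Finset (Fin K)))
    (hC1 : ∀ A ∈ C, 2 ≤ A.card ∧ A.card ≤ K - 1 ∧ Even A.card)
    (hC2 : ∀ A ∈ C, ∀ A' ∈ C, A ≠ A' → A.card = A'.card →
      4 ≤ (A \ A').card + (A' \ A).card)
    (β : ℕ → ℝ)
    (γ : Finset (Fin K) → ℝ) (hγ : ∀ A ∈ C, 0 ≤ γ A ∧ γ A ≤ 1)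
    (θ : Finset (Fin K) → ℝ)
    (hθ : ∀ A : Finset (Fin K),
      θ A = β A.card + (if A ∈ C then γ A else 0)
        + 1.5 * (A.card : ℝ) * ((A.card : ℝ) - 1)) :
    ∀ (A : Finset (Fin K)) (i j k : Fin K),
      i ∉ A → j ∉ A → k ∉ A → i ≠ j → i ≠ k → j ≠ k →
      (({insert i A, insert j A, insert k A,
          insert i (insert j A), insert i (insert k A), insert j (insert k A)} :
          Finset (Finset (Fin K))).filter (· ∈ C)).card ≤ 1 ∧
      DoubleMin (θ (insert i (insert j A)) + θ (insert k A))
                (θ (insert i (insert k A)) + θ (insert j A))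
                (θ (insert j (insert k A)) + θ (insert i A)) := by
  intro A i j k hi hj hk hij hik hjk
  set T := insert i (insert j (insert k A))
  have hAT : A ⊆ T := (subset_insert k A).trans ((subset_insert j _).trans (subset_insert i _))
  have hTcard : #T = #A + 3 := by simp [T, card_insert_of_notMem, *]
  obtain ⟨hiT, hjT, hkT⟩ : i ∈ T \ A ∧ j ∈ T \ A ∧ k ∈ T \ A := by simp [T, hi, hj, hk]
  rw [show insert i (insert j A) = T.erase k by
      rw [erase_insert_of_ne hik, erase_insert_of_ne hjk, erase_insert hk],
    show insert i (insert k A) = T.erase j by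
      rw [erase_insert_of_ne hij, erase_insert (by simp [hjk, hj])],
    show insert j (insert k A) = T.erase i by rw [erase_insert (by simp [hij, hik, hi])]]
  have heven : ∀ X ∈ C, Even #X := fun X hX => (hC1 X hX).2.2
  refine ⟨card_filter_mem_le_one_of_ssubset heven hC2 hTcard.le ?_,
    doubleMin_pair_sums heven hC2 (fun X hX => (hγ X hX).1) (fun n => β n + 1.5 * n * (n - 1))
      (fun X => by rw [hθ, speck]; ring) hAT hTcard hkT hjT hiT hjk.symm hik.symm hij.symm⟩
  simp only [mem_insert, mem_singleton]
  rintro X (rfl | rfl | rfl | rfl | rfl | rfl)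
  all_goals first
    | exact ssubset_insert_ssubset_of_mem_sdiff hAT (by omega) (by assumption)
    | exact ssubset_erase_ssubset_of_mem_sdiff hAT (by omega) (by assumption)

theorem speckled_at_most_one_speck {K : ℕ}
    (C : Finset (Finset (Fin K)))
    (hC1 : ∀ A ∈ C, 2 ≤ A.card ∧ A.card ≤ K - 1 ∧ Even A.card)
    (hC2 : ∀ A ∈ C, ∀ A' ∈ C, A ≠ A' → A.card = A'.card →
      4 ≤ (A \ A').card + (A' \ A).card)
    (β : ℕ → ℝ) (hβ : ∀ n, 0 ≤ β n ∧ β n ≤ 1) (hβ0 : β 0 = 0) (hβ1 : β 1 = 0)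
    (γ : Finset (Fin K) → ℝ) (hγ : ∀ A ∈ C, 0 ≤ γ A ∧ γ A ≤ 1)
    (θ : Finset (Fin K) → ℝ)
    (hθ : ∀ A : Finset (Fin K),
      θ A = β A.card + (if A ∈ C then γ A else 0)
        + 1.5 * (A.card : ℝ) * ((A.card : ℝ) - 1)) :
    ∀ (A : Finset (Fin K)) (i j k : Fin K),
      i ∉ A → j ∉ A → k ∉ A → i ≠ j → i ≠ k → j ≠ k →
      (({insert i A, insert j A, insert k A,
          insert i (insert j A), insert i (insert k A), insert j (insert k A)} :
          Finset (Finset (Fin K))).filter (· ∈ C)).card ≤ 1 ∧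
      DoubleMin (θ (insert i (insert j A)) + θ (insert k A))
                (θ (insert i (insert k A)) + θ (insert j A))
                (θ (insert j (insert k A)) + θ (insert i A)) :=
  speckled_at_most_one_speck_general C hC1 hC2 β γ hγ θ hθ
end

section
/- Let v be a submodular valuation on K=3 goods {i,j,k} with v(∅)=0 such that δ_{ij} < min{δ_{ik}, δ_{jk}}, where δ_{xy} = v(x)+v(y)−v(xy), and suppose prices p satisfy 0 ≤ δ_{ij} < v(j)−p_j < v(i)−p_i = v(k)−p_k < min{δ_{ik}, δ_{jk}}. Then {i,j} ∈ D(p), i.e., {i,j} maximizes v(A) − p·A over all bundles A. -/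
/-!
Let `a` be the common payoff of `{i}` and `{k}` and `b` that of `{j}`. A pair `{x, y}` earns the
sum of the singleton payoffs minus `δ_xy`, so `{i, j}` earns `a + b - δ_ij`: more than either
singleton since `δ_ij < b < a`, and more than `∅` since `δ_ij ≥ 0`. The pairs `{i, k}` and
`{j, k}` earn less than `a` and `b` respectively because `a < δ_ik, δ_jk`. Finally the payoff
`v A - p(A)` is submodular, so `{i, j, k}` earns at most the payoff of `{i, j}` plus that of
`{j, k}` minus that of `{j}`, which is less than the payoff of `{i, j}`.
-/

open Finset

namespace Finset

theorem subset_triple_cases {α : Type*} [DecidableEq α] {x y z : α} {B : Finset α}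
    (hB : B ⊆ {x, y, z}) :
    B = ∅ ∨ B = {x} ∨ B = {y} ∨ B = {z} ∨ B = {x, y} ∨ B = {x, z} ∨ B = {y, z} ∨
      B = {x, y, z} := by
  rw [← mem_powerset, ← insert_empty_eq z] at hB
  simp only [powerset_insert, powerset_empty, mem_union, image_union, image_singleton,
    mem_singleton] at hB
  grind

end Finset

theorem Fin.univ_eq_triple {i j k : Fin 3} (hij : i ≠ j) (hik : i ≠ k) (hjk : j ≠ k) :
    (univ : Finset (Fin 3)) = {i, j, k} :=
  (eq_univ_of_card _ (card_eq_three.mpr ⟨i, j, k, hij, hik, hjk, rfl⟩)).symm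

section Payoff

variable {α : Type*} (v : Finset α → ℝ) (p : α → ℝ)

def payoff (A : Finset α) : ℝ :=
  v A - ∑ m ∈ A, p m

theorem payoff_empty (hv0 : v ∅ = 0) : payoff v p ∅ = 0 := by
  simp [payoff, hv0]

theorem payoff_singleton (x : α) : payoff v p {x} = v {x} - p x := by
  simp [payoff]

variable [DecidableEq α]

theorem payoff_pair {x y : α} (hxy : x ≠ y) :
    payoff v p {x, y} = payoff v p {x} + payoff v p {y} - (v {x} + v {y} - v {x, y}) := by
  simp only [payoff, sum_pair hxy, sum_singleton]
  ring

theorem payoff_submodular (hsub : ∀ A B : Finset α, v (A ∪ B) + v (A ∩ B) ≤ v A + v B)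
    (A B : Finset α) :
    payoff v p (A ∪ B) + payoff v p (A ∩ B) ≤ payoff v p A + payoff v p B := by
  have hsum := sum_union_inter (s₁ := A) (s₂ := B) (f := p)
  simp only [payoff]
  linarith [hsub A B]

theorem payoff_triple_add_le (hsub : ∀ A B : Finset α, v (A ∪ B) + v (A ∩ B) ≤ v A + v B)
    {x y z : α} (hxz : x ≠ z) :
    payoff v p {x, y, z} + payoff v p {y} ≤ payoff v p {x, y} + payoff v p {y, z} := by
  have hunion : ({x, y} ∪ {y, z} : Finset α) = {x, y, z} := by grind
  have hinter : ({x, y} ∩ {y, z} : Finset α) = {y} := by grind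
  simpa only [hunion, hinter] using payoff_submodular v p hsub {x, y} {y, z}

end Payoff

theorem S3_violation_demand_general
    (v : Finset (Fin 3) → ℝ) (hv0 : v ∅ = 0)
    (hsub : ∀ A B : Finset (Fin 3), v (A ∪ B) + v (A ∩ B) ≤ v A + v B)
    (i j k : Fin 3) (hij : i ≠ j) (hik : i ≠ k) (hjk : j ≠ k)
    (p : Fin 3 → ℝ)
    (h0 : 0 ≤ v {i} + v {j} - v {i, j})
    (h1 : v {i} + v {j} - v {i, j} < v {j} - p j)
    (h2 : v {j} - p j < v {i} - p i)
    (h3 : v {i} - p i = v {k} - p k)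
    (h4 : v {i} - p i < min (v {i} + v {k} - v {i, k}) (v {j} + v {k} - v {j, k})) :
    ∀ B : Finset (Fin 3),
      v B - ∑ m ∈ B, p m ≤ v {i, j} - ∑ m ∈ ({i, j} : Finset (Fin 3)), p m := by
  intro B
  change payoff v p B ≤ payoff v p {i, j}
  have h4ik := h4.trans_le (min_le_left _ _)
  have h4jk := h4.trans_le (min_le_right _ _)
  have hempty := payoff_empty v p hv0
  have hi := payoff_singleton v p i
  have hj := payoff_singleton v p j
  have hk := payoff_singleton v p k
  have hpair_ij := payoff_pair v p hij
  have hpair_ik := payoff_pair v p hik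
  have hpair_jk := payoff_pair v p hjk
  have htriple := payoff_triple_add_le v p hsub (y := j) hik
  have hB : B ⊆ {i, j, k} := Fin.univ_eq_triple hij hik hjk ▸ subset_univ B
  rcases subset_triple_cases hB with rfl | rfl | rfl | rfl | rfl | rfl | rfl | rfl <;>
    linarith

theorem S3_violation_demand
    (v : Finset (Fin 3) → ℝ) (hv0 : v ∅ = 0)
    (hsub : ∀ A B : Finset (Fin 3), v (A ∪ B) + v (A ∩ B) ≤ v A + v B)
    (i j k : Fin 3) (hij : i ≠ j) (hik : i ≠ k) (hjk : j ≠ k)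
    (p : Fin 3 → ℝ) (hp : ∀ m, 0 ≤ p m)
    (h0 : 0 ≤ v {i} + v {j} - v {i, j})
    (h1 : v {i} + v {j} - v {i, j} < v {j} - p j)
    (h2 : v {j} - p j < v {i} - p i)
    (h3 : v {i} - p i = v {k} - p k)
    (h4 : v {i} - p i < min (v {i} + v {k} - v {i, k}) (v {j} + v {k} - v {j, k})) :
    ∀ B : Finset (Fin 3),
      v B - ∑ m ∈ B, p m ≤ v {i, j} - ∑ m ∈ ({i, j} : Finset (Fin 3)), p m :=
  S3_violation_demand_general v hv0 hsub i j k hij hik hjk p h0 h1 h2 h3 h4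
end
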